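/- arXiv:2404.09702 — 6 statements merged into one kernel-verified Lean document; each statement's English description precedes it below -/
import Mathlib

section
/- Let α ∈ (0,1). Then there exist constants c₁, c₂ > 0 depending only on α such that for every r ∈ (0,1/4) and every measurable function f : (0,1) → [-∞,∞], c₁ · ( r^{α−1} ∫_0^r f^*(s) ds + ∫_r^{1−r} s^{α−1} f^*(s) ds ) ≤ ∫_r^1 s^{α−1} f^{**}(s) ds ≤ c₂ · ( r^{α−1} ∫_0^r f^*(s) ds + ∫_r^{1−r} s^{α−1} f^*(s) ds ). -/
open MeasureTheory ENNReal Set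

/-- The decreasing rearrangement (with respect to Lebesgue measure on `(0,1)`) of a
measurable function `f : (0,1) → [-∞,∞]`:
`f^*(t) = inf { s ≥ 0 : |{ r ∈ (0,1) : |f(r)| > s }| ≤ t }`. -/
noncomputable def rearr (f : ℝ → EReal) (t : ℝ) : ℝ≥0∞ :=
  sInf {s : ℝ≥0∞ | volume {r : ℝ | r ∈ Set.Ioo (0 : ℝ) 1 ∧ s < (f r).abs} ≤ ENNReal.ofReal t}

/-- The maximal function `f^{**}(t) = (1/t) ∫_0^t f^*(s) ds` for `t > 0`. -/
noncomputable def rearr2 (f : ℝ → EReal) (t : ℝ) : ℝ≥0∞ :=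
  (ENNReal.ofReal t)⁻¹ * ∫⁻ s in Set.Ioo (0 : ℝ) t, rearr f s

lemma rearr_anti (f : ℝ → EReal) : Antitone (rearr f) := by
  intro a b hab
  exact sInf_le_sInf (fun s hs => hs.trans (ENNReal.ofReal_le_ofReal hab))

lemma rearr_meas (f : ℝ → EReal) : Measurable (rearr f) :=
  (rearr_anti f).measurable

lemma rpow_meas (c : ℝ) : Measurable (fun s : ℝ => ENNReal.ofReal (s ^ c)) :=
  (measurable_id.pow measurable_const).ennreal_ofReal

/-- integral bound: `∫_t^1 s^{α-2} ds ≤ t^{α-1}/(1-α)` for `0 < t < 1`, `0 < α < 1`. -/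
lemma lint_rpow_bound (α : ℝ) (hα1 : 0 < α) (hα2 : α < 1) {t : ℝ} (ht : 0 < t) (ht1 : t < 1) :
    ∫⁻ s in Ioo t 1, ENNReal.ofReal (s ^ (α - 2)) ≤ ENNReal.ofReal (t ^ (α - 1) / (1 - α)) := by
  have h0 : (0:ℝ) ∉ Set.uIcc t 1 := by
    rw [Set.mem_uIcc]
    push_neg
    constructor <;> intro h <;> linarith
  have hInt : IntervalIntegrable (fun s : ℝ => s ^ (α - 2)) volume t 1 :=
    intervalIntegral.intervalIntegrable_rpow (Or.inr h0)
  have hIntOn : IntegrableOn (fun s : ℝ => s ^ (α - 2)) (Ioo t 1) :=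
    (hInt.1).mono_set Set.Ioo_subset_Ioc_self
  rw [← MeasureTheory.ofReal_integral_eq_lintegral_ofReal hIntOn ?_]
  · apply ENNReal.ofReal_le_ofReal
    have heq : ∫ s in Ioo t 1, s ^ (α - 2) = ∫ s in t..1, s ^ (α - 2) := by
      rw [intervalIntegral.integral_of_le ht1.le, ← MeasureTheory.integral_Ioc_eq_integral_Ioo]
    rw [heq, integral_rpow (Or.inr ⟨by intro h; apply hα2.ne; linarith
        [show α - 2 = -1 from h], h0⟩)]
    rw [show α - 2 + 1 = α - 1 by ring, Real.one_rpow]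
    have ht' : (0:ℝ) < t ^ (α - 1) := Real.rpow_pos_of_pos ht _
    have hrw : (1 - t ^ (α - 1)) / (α - 1) = (t ^ (α - 1) - 1) / (1 - α) := by
      rw [div_eq_div_iff (by intro h; apply hα2.ne; linarith) (by intro h; apply hα2.ne; linarith)]
      ring
    rw [hrw, div_le_div_iff_of_pos_right (by linarith)]
    linarith
  · filter_upwards [ae_restrict_mem measurableSet_Ioo] with s hs
    exact Real.rpow_nonneg (le_of_lt (ht.trans hs.1)) _

lemma lint_Iio (g : ℝ → ℝ≥0∞) {r s : ℝ} (hs : s ≤ 1) :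
    ∫⁻ t in Ioo r 1, (Iio s).indicator g t = ∫⁻ t in Ioo r s, g t := by
  rw [lintegral_indicator measurableSet_Iio, Measure.restrict_restrict measurableSet_Iio]
  congr 1
  rw [Set.inter_comm, Set.Ioo_inter_Iio, min_eq_right hs]

lemma lint_Ioi (g : ℝ → ℝ≥0∞) {r t : ℝ} (ht : r ≤ t) :
    ∫⁻ s in Ioo r 1, (Ioi t).indicator g s = ∫⁻ s in Ioo t 1, g s := by
  rw [lintegral_indicator measurableSet_Ioi, Measure.restrict_restrict measurableSet_Ioi]
  have hset : Ioi t ∩ Ioo r 1 = Ioo t 1 := by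
    ext x
    simp only [mem_inter_iff, mem_Ioi, mem_Ioo]
    constructor
    · rintro ⟨h1, _, h3⟩; exact ⟨h1, h3⟩
    · rintro ⟨h1, h2⟩; exact ⟨h1, lt_of_le_of_lt ht h1, h2⟩
  rw [hset]

lemma lint_split (g : ℝ → ℝ≥0∞) {a b c : ℝ} (hab : a < b) (hbc : b ≤ c) :
    ∫⁻ t in Ioo a c, g t = (∫⁻ t in Ioo a b, g t) + ∫⁻ t in Ioo b c, g t := by
  rw [← Set.Ioo_union_Ico_eq_Ioo hab hbc, lintegral_union measurableSet_Ico]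
  · congr 1
    exact (setLIntegral_congr (MeasureTheory.Ioo_ae_eq_Ico)).symm
  · rw [Set.disjoint_left]
    rintro x ⟨_, hx⟩ ⟨hx', _⟩
    exact absurd hx' (not_le.2 hx)

/-- Fubini step. -/
lemma fubini_bound (α : ℝ) (hα1 : 0 < α) (hα2 : α < 1) {r : ℝ} (hr : 0 < r) (hr1 : r < 1)
    (g : ℝ → ℝ≥0∞) (hg : Measurable g) :
    ∫⁻ s in Ioo r 1, ENNReal.ofReal (s ^ (α - 2)) * (∫⁻ t in Ioo r s, g t) ≤
      ENNReal.ofReal (1 / (1 - α)) * ∫⁻ t in Ioo r 1, ENNReal.ofReal (t ^ (α - 1)) * g t := by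
  set f : ℝ → ℝ → ℝ≥0∞ := fun s t =>
    (Ioi t).indicator (fun s' => ENNReal.ofReal (s' ^ (α - 2)) * g t) s with hf
  have hmeas : Measurable (Function.uncurry f) := by
    have : Function.uncurry f = fun p : ℝ × ℝ =>
        {q : ℝ × ℝ | q.2 < q.1}.indicator
          (fun q => ENNReal.ofReal (q.1 ^ (α - 2)) * g q.2) p := by
      ext p
      simp only [Function.uncurry, hf, Set.indicator, mem_Ioi, Set.mem_setOf_eq]
    rw [this]
    apply Measurable.indicator
    · exact ((rpow_meas (α - 2)).comp measurable_fst).mul (hg.comp measurable_snd)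
    · exact measurableSet_lt measurable_snd measurable_fst
  have step1 : ∀ s ∈ Ioo r 1,
      ENNReal.ofReal (s ^ (α - 2)) * (∫⁻ t in Ioo r s, g t) = ∫⁻ t in Ioo r 1, f s t := by
    intro s hs
    rw [← lintegral_const_mul' _ _ ENNReal.ofReal_ne_top,
      ← lint_Iio (fun t => ENNReal.ofReal (s ^ (α - 2)) * g t) hs.2.le]
    apply setLIntegral_congr_fun measurableSet_Ioo
    intro t _
    simp only [hf, Set.indicator, mem_Iio, mem_Ioi]
  have lhs_eq : (∫⁻ s in Ioo r 1, ENNReal.ofReal (s ^ (α - 2)) * (∫⁻ t in Ioo r s, g t)) =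
      ∫⁻ t in Ioo r 1, ∫⁻ s in Ioo r 1, f s t := by
    rw [← lintegral_lintegral_swap (hmeas.aemeasurable)]
    exact setLIntegral_congr_fun measurableSet_Ioo step1
  rw [lhs_eq, ← lintegral_const_mul' _ _ ENNReal.ofReal_ne_top]
  apply setLIntegral_mono (((rpow_meas (α - 1)).mul hg).const_mul _)
  intro t ht
  have h1 : ∫⁻ s in Ioo r 1, f s t =
      (∫⁻ s in Ioo t 1, ENNReal.ofReal (s ^ (α - 2))) * g t := by
    rw [← lintegral_mul_const _ (rpow_meas (α - 2)),
      ← lint_Ioi (fun s => ENNReal.ofReal (s ^ (α - 2)) * g t) ht.1.le]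
  rw [h1]
  calc (∫⁻ s in Ioo t 1, ENNReal.ofReal (s ^ (α - 2))) * g t
      ≤ ENNReal.ofReal (t ^ (α - 1) / (1 - α)) * g t :=
        mul_le_mul_left (lint_rpow_bound α hα1 hα2 (hr.trans ht.1) ht.2) _
    _ = ENNReal.ofReal (1 / (1 - α)) * (ENNReal.ofReal (t ^ (α - 1)) * g t) := by
        rw [show t ^ (α - 1) / (1 - α) = (1 / (1 - α)) * t ^ (α - 1) by ring,
          ENNReal.ofReal_mul (le_of_lt (div_pos one_pos (by linarith))), mul_assoc]

/-- Lemma on the level-`r` truncation of the Hardy operator.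
Let `α ∈ (0,1)`.  There are constants `c₁, c₂ > 0` depending only on `α` such that for every
`r ∈ (0,1/4)` and every measurable `f : (0,1) → [-∞,∞]`,
`c₁ (r^{α−1} ∫_0^r f^* + ∫_r^{1−r} s^{α−1} f^*(s) ds) ≤ ∫_r^1 s^{α−1} f^{**}(s) ds
  ≤ c₂ (r^{α−1} ∫_0^r f^* + ∫_r^{1−r} s^{α−1} f^*(s) ds)`. -/
theorem statement1 (α : ℝ) (hα : α ∈ Set.Ioo (0 : ℝ) 1) :
    ∃ c₁ c₂ : ℝ, 0 < c₁ ∧ 0 < c₂ ∧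
      ∀ r : ℝ, r ∈ Set.Ioo (0 : ℝ) (1 / 4) →
        ∀ f : ℝ → EReal, Measurable f →
          ENNReal.ofReal c₁ *
              (ENNReal.ofReal (r ^ (α - 1)) * (∫⁻ s in Set.Ioo (0 : ℝ) r, rearr f s) +
                ∫⁻ s in Set.Ioo r (1 - r), ENNReal.ofReal (s ^ (α - 1)) * rearr f s) ≤
            (∫⁻ s in Set.Ioo r (1 : ℝ), ENNReal.ofReal (s ^ (α - 1)) * rearr2 f s) ∧
          (∫⁻ s in Set.Ioo r (1 : ℝ), ENNReal.ofReal (s ^ (α - 1)) * rearr2 f s) ≤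
            ENNReal.ofReal c₂ *
              (ENNReal.ofReal (r ^ (α - 1)) * (∫⁻ s in Set.Ioo (0 : ℝ) r, rearr f s) +
                ∫⁻ s in Set.Ioo r (1 - r), ENNReal.ofReal (s ^ (α - 1)) * rearr f s) := by
  obtain ⟨hα1, hα2⟩ := hα
  have h1α : (0:ℝ) < 1 - α := by linarith
  refine ⟨1/5, 3/(1-α), by norm_num, div_pos (by norm_num) h1α, ?_⟩
  rintro r ⟨hr0, hr4⟩ f hf
  have hr1 : r < 1 := by linarith
  have h2r : 2*r ≤ 1 := by linarith
  have hrlt : r < 1 - r := by linarith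
  have h1r1 : 1 - r ≤ 1 := by linarith
  set g : ℝ → ℝ≥0∞ := rearr f with hgdef
  have hganti : Antitone g := rearr_anti f
  have hgmeas : Measurable g := rearr_meas f
  set F : ℝ → ℝ≥0∞ := fun s => ∫⁻ t in Ioo (0:ℝ) s, g t with hFdef
  have hFmono : Monotone F := fun a b hab => lintegral_mono_set (Ioo_subset_Ioo_right hab)
  have hFmeas : Measurable F := hFmono.measurable
  set X : ℝ≥0∞ := ENNReal.ofReal (r ^ (α - 1)) * F r with hXdef
  set Y : ℝ≥0∞ := ∫⁻ s in Ioo r (1 - r), ENNReal.ofReal (s ^ (α - 1)) * g s with hYdef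
  set I : ℝ≥0∞ := ∫⁻ s in Ioo r (1:ℝ), ENNReal.ofReal (s ^ (α - 1)) * rearr2 f s with hIdef
  -- pointwise: the integrand of I equals s^{α-2} F s
  have hker : ∀ s : ℝ, 0 < s →
      ENNReal.ofReal (s ^ (α - 1)) * rearr2 f s = ENNReal.ofReal (s ^ (α - 2)) * F s := by
    intro s hs
    have : rearr2 f s = (ENNReal.ofReal s)⁻¹ * F s := rfl
    rw [this, ← mul_assoc]
    congr 1
    rw [← ENNReal.ofReal_inv_of_pos hs, ← ENNReal.ofReal_mul (Real.rpow_nonneg hs.le _)]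
    congr 1
    rw [← Real.rpow_neg_one s, ← Real.rpow_add hs]
    congr 1
    ring
  have hIeq : I = ∫⁻ s in Ioo r 1, ENNReal.ofReal (s ^ (α - 2)) * F s :=
    setLIntegral_congr_fun measurableSet_Ioo
      (fun s hs => hker s (hr0.trans hs.1))
  -- ### Lower bound, part A
  have hreal : (1/4) * r ^ (α - 1) ≤ (2*r) ^ (α - 2) * r := by
    rw [Real.mul_rpow (by norm_num) hr0.le, mul_assoc,
      show r ^ (α - 2) * r = r ^ (α - 1) by
        nth_rewrite 2 [← Real.rpow_one r]
        rw [← Real.rpow_add hr0]; congr 1; ring]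
    apply mul_le_mul_of_nonneg_right ?_ (Real.rpow_nonneg hr0.le _)
    calc (1/4 : ℝ) = 2 ^ (-2 : ℝ) := by
          rw [show (-2:ℝ) = ((-2:ℤ):ℝ) by norm_num, Real.rpow_intCast]; norm_num
      _ ≤ 2 ^ (α - 2) := Real.rpow_le_rpow_of_exponent_le (by norm_num) (by linarith)
  have hA : ENNReal.ofReal (1/4) * X ≤ I := by
    rw [hIeq, hXdef]
    calc ENNReal.ofReal (1/4) * (ENNReal.ofReal (r ^ (α - 1)) * F r)
        = ENNReal.ofReal ((1/4) * r ^ (α - 1)) * F r := by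
          rw [← mul_assoc, ← ENNReal.ofReal_mul (by norm_num)]
      _ ≤ ENNReal.ofReal ((2*r) ^ (α - 2) * r) * F r :=
          mul_le_mul_left (ENNReal.ofReal_le_ofReal hreal) _
      _ = ENNReal.ofReal ((2*r) ^ (α - 2)) * F r * volume (Ioo r (2*r)) := by
          rw [Real.volume_Ioo, show 2*r - r = r by ring,
            ENNReal.ofReal_mul (Real.rpow_nonneg (by linarith) _)]
          ring
      _ = ∫⁻ _ in Ioo r (2*r), ENNReal.ofReal ((2*r) ^ (α - 2)) * F r :=
          (setLIntegral_const _ _).symm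
      _ ≤ ∫⁻ s in Ioo r (2*r), ENNReal.ofReal (s ^ (α - 2)) * F s := by
          apply setLIntegral_mono ((rpow_meas (α - 2)).mul hFmeas)
          intro s hs
          exact mul_le_mul'
            (ENNReal.ofReal_le_ofReal
              (Real.rpow_le_rpow_of_nonpos (hr0.trans hs.1) hs.2.le (by linarith)))
            (hFmono hs.1.le)
      _ ≤ ∫⁻ s in Ioo r 1, ENNReal.ofReal (s ^ (α - 2)) * F s :=
          lintegral_mono_set (Ioo_subset_Ioo_right h2r)
  -- ### Lower bound, part B
  have hgG : ∀ s : ℝ, 0 < s → g s ≤ rearr2 f s := by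
    intro s hs
    have h1 : ENNReal.ofReal s * g s ≤ F s := by
      have h2 : (∫⁻ _ in Ioo (0:ℝ) s, g s) ≤ F s :=
        setLIntegral_mono hgmeas (fun t ht => hganti ht.2.le)
      rwa [setLIntegral_const, Real.volume_Ioo, sub_zero, mul_comm] at h2
    calc g s = (ENNReal.ofReal s)⁻¹ * (ENNReal.ofReal s * g s) := by
          rw [← mul_assoc, ENNReal.inv_mul_cancel (ENNReal.ofReal_pos.mpr hs).ne'
            ENNReal.ofReal_ne_top, one_mul]
      _ ≤ (ENNReal.ofReal s)⁻¹ * F s := mul_le_mul_right h1 _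
      _ = rearr2 f s := rfl
  have hB : Y ≤ I := by
    rw [hYdef, hIdef]
    refine le_trans ?_ (lintegral_mono_set (Ioo_subset_Ioo_right h1r1))
    apply setLIntegral_mono ?_ ?_
    · have : Measurable (fun s : ℝ => (ENNReal.ofReal s)⁻¹ * F s) :=
        (measurable_id.ennreal_ofReal.inv).mul hFmeas
      exact (rpow_meas (α - 1)).mul this
    · intro s hs
      exact mul_le_mul_right (hgG s (hr0.trans hs.1)) _
  -- combine lower bound
  have hlow : ENNReal.ofReal (1/5) * (X + Y) ≤ I := by
    have hX4 : X ≤ 4 * I := by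
      have e4 : (4:ℝ≥0∞) * ENNReal.ofReal (1/4) = 1 := by
        rw [show (4:ℝ≥0∞) = ENNReal.ofReal 4 by simp [ENNReal.ofReal_ofNat],
          ← ENNReal.ofReal_mul (by norm_num)]
        norm_num
      calc X = (4 * ENNReal.ofReal (1/4)) * X := by rw [e4, one_mul]
        _ = 4 * (ENNReal.ofReal (1/4) * X) := by rw [mul_assoc]
        _ ≤ 4 * I := mul_le_mul_right hA _
    have e5 : ENNReal.ofReal (1/5) * 5 = 1 := by
      rw [show (5:ℝ≥0∞) = ENNReal.ofReal 5 by simp [ENNReal.ofReal_ofNat],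
        ← ENNReal.ofReal_mul (by norm_num)]
      norm_num
    calc ENNReal.ofReal (1/5) * (X + Y)
        ≤ ENNReal.ofReal (1/5) * (4 * I + I) := mul_le_mul_right (add_le_add hX4 hB) _
      _ = (ENNReal.ofReal (1/5) * 5) * I := by ring
      _ = I := by rw [e5, one_mul]
  -- ### Upper bound
  have hsplitF : ∀ s ∈ Ioo r (1:ℝ), F s = F r + ∫⁻ t in Ioo r s, g t :=
    fun s hs => lint_split g hr0 hs.1.le
  have hup1 : I = (∫⁻ s in Ioo r 1, ENNReal.ofReal (s ^ (α - 2)) * F r) +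
      ∫⁻ s in Ioo r 1, ENNReal.ofReal (s ^ (α - 2)) * (∫⁻ t in Ioo r s, g t) := by
    rw [hIeq, ← lintegral_add_left ((rpow_meas (α - 2)).mul_const _)]
    apply setLIntegral_congr_fun measurableSet_Ioo
    exact fun s hs => by rw [hsplitF s hs, mul_add]
  have hT1 : (∫⁻ s in Ioo r 1, ENNReal.ofReal (s ^ (α - 2)) * F r) ≤
      ENNReal.ofReal (1/(1-α)) * X := by
    rw [lintegral_mul_const _ (rpow_meas (α - 2))]
    calc (∫⁻ s in Ioo r 1, ENNReal.ofReal (s ^ (α - 2))) * F r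
        ≤ ENNReal.ofReal (r ^ (α - 1) / (1 - α)) * F r :=
          mul_le_mul_left (lint_rpow_bound α hα1 hα2 hr0 hr1) _
      _ = ENNReal.ofReal (1/(1-α)) * X := by
          rw [show r ^ (α-1) / (1-α) = (1/(1-α)) * r ^ (α-1) by ring,
            ENNReal.ofReal_mul (le_of_lt (div_pos one_pos h1α)), mul_assoc, hXdef]
  set Z : ℝ≥0∞ := ∫⁻ t in Ioo (1-r) 1, ENNReal.ofReal (t ^ (α - 1)) * g t with hZdef
  have hT2 : (∫⁻ s in Ioo r 1, ENNReal.ofReal (s ^ (α - 2)) * (∫⁻ t in Ioo r s, g t)) ≤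
      ENNReal.ofReal (1/(1-α)) * (Y + Z) := by
    refine (fubini_bound α hα1 hα2 hr0 hr1 g hgmeas).trans ?_
    apply mul_le_mul_right
    exact le_of_eq (lint_split _ hrlt h1r1)
  have hrg : ENNReal.ofReal r * g (1-r) ≤ F r := by
    have h2 : (∫⁻ _ in Ioo (0:ℝ) r, g (1-r)) ≤ F r :=
      setLIntegral_mono hgmeas (fun t ht => hganti (le_of_lt (ht.2.trans hrlt)))
    rwa [setLIntegral_const, Real.volume_Ioo, sub_zero, mul_comm] at h2
  have hX1 : F r ≤ X := by
    rw [hXdef]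
    calc F r = 1 * F r := (one_mul _).symm
      _ ≤ ENNReal.ofReal (r ^ (α - 1)) * F r := by
          apply mul_le_mul_left
          rw [show (1:ℝ≥0∞) = ENNReal.ofReal 1 by simp]
          apply ENNReal.ofReal_le_ofReal
          calc (1:ℝ) = 1 ^ (α - 1) := (Real.one_rpow _).symm
            _ ≤ r ^ (α - 1) := Real.rpow_le_rpow_of_nonpos hr0 hr1.le (by linarith)
  have hZ : Z ≤ ENNReal.ofReal 2 * X := by
    have hpt : ∀ t ∈ Ioo (1-r) (1:ℝ),
        ENNReal.ofReal (t ^ (α - 1)) * g t ≤ ENNReal.ofReal 2 * g (1-r) := by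
      intro t ht
      obtain ⟨ht1, ht2⟩ := ht
      apply mul_le_mul' ?_ (hganti ht1.le)
      apply ENNReal.ofReal_le_ofReal
      calc t ^ (α - 1) ≤ (3/4 : ℝ) ^ (α - 1) :=
            Real.rpow_le_rpow_of_nonpos (by norm_num) (by linarith) (by linarith)
        _ ≤ (3/4 : ℝ) ^ (-1 : ℝ) :=
            Real.rpow_le_rpow_of_exponent_ge (by norm_num) (by norm_num) (by linarith)
        _ ≤ 2 := by rw [Real.rpow_neg_one]; norm_num
    calc Z ≤ ∫⁻ _ in Ioo (1-r) 1, ENNReal.ofReal 2 * g (1-r) :=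
          setLIntegral_mono measurable_const hpt
      _ = ENNReal.ofReal 2 * (ENNReal.ofReal r * g (1-r)) := by
          rw [setLIntegral_const, Real.volume_Ioo, show 1 - (1-r) = r by ring]
          ring
      _ ≤ ENNReal.ofReal 2 * F r := mul_le_mul_right hrg _
      _ ≤ ENNReal.ofReal 2 * X := mul_le_mul_right hX1 _
  have hupper : I ≤ ENNReal.ofReal (3/(1-α)) * (X + Y) := by
    have hsum : ENNReal.ofReal (1/(1-α)) + ENNReal.ofReal (1/(1-α)) * ENNReal.ofReal 2 =
        ENNReal.ofReal (3/(1-α)) := by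
      rw [← ENNReal.ofReal_mul (le_of_lt (div_pos one_pos h1α)),
        ← ENNReal.ofReal_add (le_of_lt (div_pos one_pos h1α))
          (by positivity)]
      congr 1
      field_simp
      ring
    calc I = (∫⁻ s in Ioo r 1, ENNReal.ofReal (s ^ (α - 2)) * F r) +
        ∫⁻ s in Ioo r 1, ENNReal.ofReal (s ^ (α - 2)) * (∫⁻ t in Ioo r s, g t) := hup1
      _ ≤ ENNReal.ofReal (1/(1-α)) * X + ENNReal.ofReal (1/(1-α)) * (Y + Z) :=
          add_le_add hT1 hT2
      _ ≤ ENNReal.ofReal (1/(1-α)) * X +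
          ENNReal.ofReal (1/(1-α)) * (Y + ENNReal.ofReal 2 * X) := by
          exact add_le_add_right (mul_le_mul_right (add_le_add_right hZ Y) _) _
      _ = (ENNReal.ofReal (1/(1-α)) + ENNReal.ofReal (1/(1-α)) * ENNReal.ofReal 2) * X +
          ENNReal.ofReal (1/(1-α)) * Y := by ring
      _ = ENNReal.ofReal (3/(1-α)) * X + ENNReal.ofReal (1/(1-α)) * Y := by rw [hsum]
      _ ≤ ENNReal.ofReal (3/(1-α)) * X + ENNReal.ofReal (3/(1-α)) * Y := by
          apply add_le_add_right
          apply mul_le_mul_left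
          apply ENNReal.ofReal_le_ofReal
          rw [div_le_div_iff_of_pos_right h1α]; norm_num
      _ = ENNReal.ofReal (3/(1-α)) * (X + Y) := by rw [mul_add]
  exact ⟨hlow, hupper⟩
end

section
/- Let ‖·‖_X be a rearrangement-invariant function norm on (0,1) and let α ∈ (0,∞). Then there exist constants c₁, c₂ > 0 depending only on α such that for every r ∈ (0,1/2), c₁ · r · ‖ s ↦ s^{α−1} χ_{(r,1)}(s) ‖_X ≤ ‖ s ↦ s^{α} (χ_{(0,r)})^{**}(s) ‖_X ≤ c₂ · r · ‖ s ↦ s^{α−1} χ_{(r,1)}(s) ‖_X, where (χ_{(0,r)})^{**}(s) = min{1, r/s}. -/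
open MeasureTheory ENNReal NNReal Set

/-- The decreasing rearrangement (with respect to Lebesgue measure on `(0,1)`) of a
function `f : (0,1) → [0,∞]`:
`f^*(t) = inf { s ≥ 0 : |{ r ∈ (0,1) : f(r) > s }| ≤ t }`. -/
noncomputable def nnrearr (f : ℝ → ℝ≥0∞) (t : ℝ) : ℝ≥0∞ :=
  sInf {s : ℝ≥0∞ | volume {r : ℝ | r ∈ Set.Ioo (0 : ℝ) 1 ∧ s < f r} ≤ ENNReal.ofReal t}

/-- A rearrangement-invariant function norm on `(0,1)`: a functional `N` assigning to each
measurable `f : (0,1) → [0,∞]` a value in `[0,∞]` satisfying the axioms (P1)–(P6) of a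
rearrangement-invariant Banach function norm. -/
structure RIFunctionNorm where
  /-- The functional. -/
  N : (ℝ → ℝ≥0∞) → ℝ≥0∞
  /-- (P1): subadditivity. -/
  add_le : ∀ f g : ℝ → ℝ≥0∞, Measurable f → Measurable g →
    N (fun t => f t + g t) ≤ N f + N g
  /-- (P1): positive homogeneity. -/
  smul_eq : ∀ (c : ℝ≥0) (f : ℝ → ℝ≥0∞), Measurable f →
    N (fun t => (c : ℝ≥0∞) * f t) = (c : ℝ≥0∞) * N f
  /-- (P1): positivity on functions not vanishing a.e. in `(0,1)`. -/
  pos : ∀ f : ℝ → ℝ≥0∞, Measurable f →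
    ¬ (∀ᵐ t ∂(volume.restrict (Set.Ioo (0 : ℝ) 1)), f t = 0) → 0 < N f
  /-- (P2): monotonicity. -/
  mono : ∀ f g : ℝ → ℝ≥0∞, Measurable f → Measurable g →
    (∀ᵐ t ∂(volume.restrict (Set.Ioo (0 : ℝ) 1)), f t ≤ g t) → N f ≤ N g
  /-- (P3): the Fatou property. -/
  sup_seq : ∀ (f : ℕ → ℝ → ℝ≥0∞) (g : ℝ → ℝ≥0∞), (∀ k, Measurable (f k)) → Measurable g →
    (∀ᵐ t ∂(volume.restrict (Set.Ioo (0 : ℝ) 1)),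
      (∀ k, f k t ≤ f (k + 1) t) ∧ (⨆ k, f k t) = g t) →
    (⨆ k, N (f k)) = N g
  /-- (P4): finiteness on the constant function `1`. -/
  const_lt : N (fun _ => 1) < ⊤
  /-- (P5): the integral over `(0,1)` is dominated by the norm. -/
  int_le : ∃ c : ℝ≥0, ∀ f : ℝ → ℝ≥0∞, Measurable f →
    (∫⁻ t in Set.Ioo (0 : ℝ) 1, f t) ≤ (c : ℝ≥0∞) * N f
  /-- (P6): rearrangement invariance. -/
  rearr_eq : ∀ f g : ℝ → ℝ≥0∞, Measurable f → Measurable g →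
    nnrearr f = nnrearr g → N f = N g


lemma nnrearr_indicator_eq (c : ℝ≥0∞) (A B : Set ℝ)
    (hAB : volume (A ∩ Set.Ioo (0:ℝ) 1) = volume (B ∩ Set.Ioo (0:ℝ) 1)) :
    nnrearr (fun s => A.indicator (fun _ => c) s) =
      nnrearr (fun s => B.indicator (fun _ => c) s) := by
  have key : ∀ (A : Set ℝ) (s : ℝ≥0∞),
      {r : ℝ | r ∈ Set.Ioo (0:ℝ) 1 ∧ s < A.indicator (fun _ => c) r}
        = if s < c then A ∩ Set.Ioo (0:ℝ) 1 else ∅ := by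
    intro A s
    split_ifs with h
    · ext x
      simp only [Set.mem_setOf_eq, Set.mem_inter_iff, Set.indicator_apply]
      constructor
      · rintro ⟨hx, hs⟩
        by_cases hxA : x ∈ A
        · exact ⟨hxA, hx⟩
        · simp [hxA] at hs
      · rintro ⟨hxA, hx⟩
        exact ⟨hx, by simp [hxA, h]⟩
    · ext x
      simp only [Set.mem_setOf_eq, Set.mem_empty_iff_false, iff_false, not_and]
      intro hx hs
      by_cases hxA : x ∈ A
      · simp [hxA] at hs; exact h hs
      · simp [hxA] at hs
  funext t
  unfold nnrearr
  congr 1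
  ext s
  simp only [Set.mem_setOf_eq, key]
  split_ifs <;> simp [hAB]

lemma key_ineq {α r s : ℝ} (hα : 0 < α) (hr : 0 < r) (hs : r < s) (hs2 : s < 2*r) :
    r ^ α ≤ (max 1 (2 ^ (1 - α)) * r) * s ^ (α - 1) := by
  have hs0 : 0 < s := hr.trans hs
  rcases le_or_gt 1 α with h1 | h1
  · have h2 : r ^ (α-1) ≤ s ^ (α-1) :=
      Real.rpow_le_rpow hr.le hs.le (by linarith)
    calc r ^ α = r * r ^ (α - 1) := by
          rw [Real.rpow_sub_one hr.ne']
          field_simp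
      _ ≤ (1 * r) * s ^ (α-1) := by
          rw [one_mul]
          exact mul_le_mul_of_nonneg_left h2 hr.le
      _ ≤ (max 1 (2 ^ (1 - α)) * r) * s ^ (α-1) := by
          gcongr <;> first | positivity | exact le_max_left _ _
  · have h2 : (2*r) ^ (α-1) ≤ s ^ (α-1) :=
      Real.rpow_le_rpow_of_nonpos hs0 hs2.le (by linarith)
    have h3 : (2*r) ^ (α-1) = 2 ^ (α-1) * r ^ (α-1) :=
      Real.mul_rpow (by norm_num) hr.le
    calc r ^ α = (2 ^ (1-α) * r) * (2 ^ (α-1) * r ^ (α-1)) := by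
          rw [Real.rpow_sub_one hr.ne', Real.rpow_sub_one (by norm_num : (2:ℝ) ≠ 0)]
          have h4 : (2:ℝ)^(1-α) * 2^α = 2 := by
            rw [← Real.rpow_add (by norm_num)]; norm_num
          field_simp
          linear_combination -h4
      _ ≤ (2 ^ (1-α) * r) * s ^ (α-1) := by
          rw [← h3]
          exact mul_le_mul_of_nonneg_left h2 (by positivity)
      _ ≤ (max 1 (2 ^ (1 - α)) * r) * s ^ (α-1) := by
          gcongr <;> first | positivity | exact le_max_right _ _

/-- Lemma on the norm of `s^α (χ_{(0,r)})^{**}`.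
Let `‖·‖_X` be a rearrangement-invariant function norm on `(0,1)` and `α ∈ (0,∞)`.  There are
constants `c₁, c₂ > 0` depending only on `α` such that for every `r ∈ (0,1/2)`,
`c₁ · r · ‖s^{α−1} χ_{(r,1)}‖_X ≤ ‖s^α (χ_{(0,r)})^{**}(s)‖_X ≤ c₂ · r · ‖s^{α−1} χ_{(r,1)}‖_X`,
where `(χ_{(0,r)})^{**}(s) = min {1, r/s}`. -/
theorem statement2 (α : ℝ) (hα : 0 < α) :
    ∃ c₁ c₂ : ℝ, 0 < c₁ ∧ 0 < c₂ ∧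
      ∀ X : RIFunctionNorm, ∀ r : ℝ, r ∈ Set.Ioo (0 : ℝ) (1 / 2) →
        ENNReal.ofReal c₁ * (ENNReal.ofReal r *
            X.N (fun s => Set.indicator (Set.Ioo r 1)
              (fun s => ENNReal.ofReal (s ^ (α - 1))) s)) ≤
          X.N (fun s => ENNReal.ofReal (s ^ α * min 1 (r / s))) ∧
        X.N (fun s => ENNReal.ofReal (s ^ α * min 1 (r / s))) ≤
          ENNReal.ofReal c₂ * (ENNReal.ofReal r *
            X.N (fun s => Set.indicator (Set.Ioo r 1)
              (fun s => ENNReal.ofReal (s ^ (α - 1))) s)) := by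
  refine ⟨1, max 1 (2 ^ (1 - α)) + 1, one_pos, by positivity, ?_⟩
  intro X r hr
  obtain ⟨hr0, hr2⟩ := hr
  have hr1 : r < 1 := by linarith
  have h2r1 : 2 * r ≤ 1 := by linarith
  set C : ℝ := max 1 (2 ^ (1 - α)) with hC
  have hC0 : 0 < C := lt_of_lt_of_le one_pos (le_max_left _ _)
  set g : ℝ → ℝ≥0∞ := fun s => Set.indicator (Set.Ioo r 1)
      (fun s => ENNReal.ofReal (s ^ (α - 1))) s with hgdef
  set f : ℝ → ℝ≥0∞ := fun s => ENNReal.ofReal (s ^ α * min 1 (r / s)) with hfdef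
  have hmr : Measurable fun s : ℝ => ENNReal.ofReal (s ^ (α - 1)) := by fun_prop
  have hg : Measurable g := hmr.indicator measurableSet_Ioo
  have hf : Measurable f := by
    apply ENNReal.measurable_ofReal.comp
    apply Measurable.mul (by fun_prop)
    exact measurable_const.min (measurable_const.div measurable_id)
  -- the key pointwise identity on (r,1)
  have eq1 : ∀ s : ℝ, s ∈ Set.Ioo r 1 →
      ENNReal.ofReal r * ENNReal.ofReal (s ^ (α - 1)) = f s := by
    intro s hs
    have hs0 : 0 < s := hr0.trans hs.1
    have hmin : min 1 (r / s) = r / s :=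
      min_eq_right ((div_le_one hs0).2 hs.1.le)
    have harith : r * s ^ (α - 1) = s ^ α * min 1 (r / s) := by
      rw [hmin, Real.rpow_sub_one hs0.ne']
      field_simp
    rw [hfdef, ← ENNReal.ofReal_mul hr0.le, harith]
  have hrg : ∀ s : ℝ, ENNReal.ofReal r * g s ≤ f s := by
    intro s
    by_cases hs : s ∈ Set.Ioo r 1
    · rw [hgdef]
      simp only [Set.indicator_of_mem hs]
      exact (eq1 s hs).le
    · rw [hgdef]
      simp [Set.indicator_of_notMem hs]
  have hcoe : ∀ x : ℝ, ((x.toNNReal : ℝ≥0) : ℝ≥0∞) = ENNReal.ofReal x := fun _ => rfl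
  constructor
  · -- lower bound
    rw [ENNReal.ofReal_one, one_mul, ← hcoe r, ← X.smul_eq r.toNNReal g hg]
    refine X.mono _ _ (measurable_const.mul hg) hf (Filter.Eventually.of_forall ?_)
    intro s
    rw [hcoe r]
    exact hrg s
  · -- upper bound
    set f₁ : ℝ → ℝ≥0∞ := Set.indicator (Set.Ioc 0 r) (fun _ => ENNReal.ofReal (r ^ α))
      with hf₁
    set f₂ : ℝ → ℝ≥0∞ := fun s => ENNReal.ofReal r * g s with hf₂
    set f₁' : ℝ → ℝ≥0∞ := Set.indicator (Set.Ioo r (2*r)) (fun _ => ENNReal.ofReal (r ^ α))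
      with hf₁'
    have hmf₁ : Measurable f₁ := measurable_const.indicator measurableSet_Ioc
    have hmf₂ : Measurable f₂ := measurable_const.mul hg
    have hmf₁' : Measurable f₁' := measurable_const.indicator measurableSet_Ioo
    -- Step 1: f ≤ f₁ + f₂ a.e. on (0,1)
    have step1 : X.N f ≤ X.N (fun s => f₁ s + f₂ s) := by
      refine X.mono _ _ hf (hmf₁.add hmf₂) ?_
      rw [ae_restrict_iff' measurableSet_Ioo]
      refine Filter.Eventually.of_forall ?_
      intro s hs
      rcases le_or_gt s r with hsr | hsr
      · have hs0 : 0 < s := hs.1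
        have h1 : f s ≤ f₁ s := by
          have hmin : min 1 (r / s) = 1 := min_eq_left ((one_le_div hs0).2 hsr)
          have hind : f₁ s = ENNReal.ofReal (r ^ α) :=
            Set.indicator_of_mem (Set.mem_Ioc.mpr ⟨hs0, hsr⟩) _
          rw [hind]
          show ENNReal.ofReal (s ^ α * min 1 (r / s)) ≤ ENNReal.ofReal (r ^ α)
          rw [hmin, mul_one]
          exact ENNReal.ofReal_le_ofReal (Real.rpow_le_rpow hs0.le hsr hα.le)
        calc f s ≤ f₁ s := h1
          _ ≤ f₁ s + f₂ s := le_self_add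
      · have hmem : s ∈ Set.Ioo r 1 := ⟨hsr, hs.2⟩
        have : f₂ s = f s := by
          show ENNReal.ofReal r * g s = f s
          have hind : g s = ENNReal.ofReal (s ^ (α - 1)) := Set.indicator_of_mem hmem _
          rw [hind]
          exact eq1 s hmem
        rw [← this]
        exact le_add_self
    -- Step 2: subadditivity
    have step2 : X.N (fun s => f₁ s + f₂ s) ≤ X.N f₁ + X.N f₂ := X.add_le _ _ hmf₁ hmf₂
    -- Step 3: N f₂ = ofReal r * N g
    have step3 : X.N f₂ = ENNReal.ofReal r * X.N g := by
      rw [hf₂]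
      rw [show (fun s => ENNReal.ofReal r * g s)
          = fun s => ((r.toNNReal : ℝ≥0) : ℝ≥0∞) * g s from rfl]
      rw [X.smul_eq r.toNNReal g hg, hcoe]
    -- Step 4: N f₁ = N f₁' by rearrangement invariance
    have step4 : X.N f₁ = X.N f₁' := by
      refine X.rearr_eq _ _ hmf₁ hmf₁' ?_
      refine nnrearr_indicator_eq _ _ _ ?_
      have e1 : Set.Ioc 0 r ∩ Set.Ioo (0:ℝ) 1 = Set.Ioc 0 r := by
        apply Set.inter_eq_left.2
        intro x hx
        exact ⟨hx.1, lt_of_le_of_lt hx.2 hr1⟩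
      have e2 : Set.Ioo r (2*r) ∩ Set.Ioo (0:ℝ) 1 = Set.Ioo r (2*r) := by
        apply Set.inter_eq_left.2
        intro x hx
        exact ⟨hr0.trans hx.1, lt_of_lt_of_le hx.2 h2r1⟩
      rw [e1, e2, Real.volume_Ioc, Real.volume_Ioo]
      norm_num
      ring_nf
    -- Step 5: N f₁' ≤ ofReal (C*r) * N g
    have step5 : X.N f₁' ≤ ENNReal.ofReal (C*r) * X.N g := by
      rw [← hcoe (C*r), ← X.smul_eq (C*r).toNNReal g hg]
      refine X.mono _ _ hmf₁' (measurable_const.mul hg) (Filter.Eventually.of_forall ?_)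
      intro s
      by_cases hs : s ∈ Set.Ioo r (2*r)
      · have hs1 : s ∈ Set.Ioo r 1 := ⟨hs.1, lt_of_lt_of_le hs.2 h2r1⟩
        have hind1 : f₁' s = ENNReal.ofReal (r ^ α) := Set.indicator_of_mem hs _
        have hind2 : g s = ENNReal.ofReal (s ^ (α - 1)) := Set.indicator_of_mem hs1 _
        rw [hind1]
        show _ ≤ ((((C*r).toNNReal : ℝ≥0)) : ℝ≥0∞) * g s
        rw [hind2, hcoe, ← ENNReal.ofReal_mul (by positivity)]
        exact ENNReal.ofReal_le_ofReal (key_ineq hα hr0 hs.1 hs.2)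
      · have hind1 : f₁' s = 0 := Set.indicator_of_notMem hs _
        rw [hind1]
        exact zero_le
    -- Combine
    calc X.N f ≤ X.N f₁ + X.N f₂ := step1.trans step2
      _ ≤ ENNReal.ofReal (C*r) * X.N g + ENNReal.ofReal r * X.N g := by
          rw [step3, step4]; exact add_le_add_left step5 _
      _ = ENNReal.ofReal (C + 1) * (ENNReal.ofReal r * X.N g) := by
          rw [ENNReal.ofReal_add hC0.le zero_le_one, ENNReal.ofReal_one,
            ENNReal.ofReal_mul hC0.le, add_mul, one_mul, mul_assoc]
end

section
/- Let γ ∈ (−∞,1) and let ‖·‖_X be a rearrangement-invariant function norm on (0,1). Define the operator T_γ by (T_γ f)(r) = r^{1−γ} ∫_r^1 s^{γ−2} f(s) ds for r ∈ (0,1) and measurable f : (0,1) → [0,∞]. Then ‖T_γ f‖_X ≤ (1/(1−γ)) ‖f‖_X for every measurable f : (0,1) → [0,∞]. -/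
open MeasureTheory ENNReal NNReal Set

namespace S3

/-- distribution function on (0,1) -/
noncomputable def dist01 (f : ℝ → ℝ≥0∞) (s : ℝ≥0∞) : ℝ≥0∞ :=
  volume {r : ℝ | r ∈ Set.Ioo (0 : ℝ) 1 ∧ s < f r}

theorem nnrearr_eq (f : ℝ → ℝ≥0∞) (t : ℝ) :
    nnrearr f t = sInf {s : ℝ≥0∞ | dist01 f s ≤ ENNReal.ofReal t} := rfl

theorem dist01_anti (f : ℝ → ℝ≥0∞) : Antitone (dist01 f) := by
  intro s s' h
  exact measure_mono (fun r hr => ⟨hr.1, lt_of_le_of_lt h hr.2⟩)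

theorem dist01_le_one (f : ℝ → ℝ≥0∞) (s : ℝ≥0∞) : dist01 f s ≤ 1 := by
  calc dist01 f s ≤ volume (Set.Ioo (0:ℝ) 1) := measure_mono (fun r hr => hr.1)
  _ = 1 := by simp

theorem dist01_top (f : ℝ → ℝ≥0∞) : dist01 f ⊤ = 0 := by
  have : {r : ℝ | r ∈ Set.Ioo (0 : ℝ) 1 ∧ ⊤ < f r} = ∅ := by
    ext r; simp [not_top_lt]
  simp [dist01, this]

theorem measurableSet_dist01 {f : ℝ → ℝ≥0∞} (hf : Measurable f) (s : ℝ≥0∞) :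
    MeasurableSet {r : ℝ | r ∈ Set.Ioo (0 : ℝ) 1 ∧ s < f r} := by
  have : {r : ℝ | r ∈ Set.Ioo (0 : ℝ) 1 ∧ s < f r}
      = Set.Ioo (0:ℝ) 1 ∩ f ⁻¹' (Set.Ioi s) := rfl
  rw [this]
  exact measurableSet_Ioo.inter (hf measurableSet_Ioi)

theorem lt_nnrearr_iff {f : ℝ → ℝ≥0∞} {s : ℝ≥0∞} {t : ℝ} :
    s < nnrearr f t ↔ ENNReal.ofReal t < dist01 f s := by
  constructor
  · intro h
    by_contra hc
    push_neg at hc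
    rw [nnrearr_eq] at h
    exact absurd h (not_lt.2 (sInf_le hc))
  · intro h
    have hstop : s ≠ ⊤ := by
      rintro rfl
      rw [dist01_top] at h
      exact absurd h (by simp)
    by_contra hc
    push_neg at hc
    rw [nnrearr_eq] at hc
    -- enlarge the set: s < f r implies s + (n+1)⁻¹ < f r for some n
    have hsub : {r : ℝ | r ∈ Set.Ioo (0 : ℝ) 1 ∧ s < f r}
        ⊆ ⋃ n : ℕ, {r : ℝ | r ∈ Set.Ioo (0 : ℝ) 1 ∧ s + (((n:ℝ≥0∞))+1)⁻¹ < f r} := by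
      intro r hr
      rcases hr with ⟨hrI, hrs⟩
      rcases eq_or_ne (f r) ⊤ with hfr | hfr
      · exact Set.mem_iUnion.2 ⟨0, ⟨hrI, by
          rw [hfr]
          exact ENNReal.add_lt_top.2 ⟨hstop.lt_top, by simp⟩⟩⟩
      · have hd : f r - s ≠ 0 := by
          simp only [ne_eq, tsub_eq_zero_iff_le, not_le]; exact hrs
        obtain ⟨n, hn⟩ := ENNReal.exists_inv_nat_lt hd
        refine Set.mem_iUnion.2 ⟨n, ⟨hrI, ?_⟩⟩
        have h1 : ((n:ℝ≥0∞)+1)⁻¹ ≤ ((n:ℝ≥0∞))⁻¹ :=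
          ENNReal.inv_le_inv.2 (by simp)
        have step1 : s + ((n:ℝ≥0∞)+1)⁻¹ ≤ s + ((n:ℝ≥0∞))⁻¹ := add_le_add_right h1 s
        have step2 : s + ((n:ℝ≥0∞))⁻¹ < f r :=
          lt_of_lt_of_le (ENNReal.add_lt_add_left hstop hn) (add_tsub_cancel_of_le hrs.le).le
        exact lt_of_le_of_lt step1 step2
    have hmono : Monotone (fun n : ℕ =>
        {r : ℝ | r ∈ Set.Ioo (0 : ℝ) 1 ∧ s + (((n:ℝ≥0∞))+1)⁻¹ < f r}) := by
      intro n m hnm r hr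
      refine ⟨hr.1, lt_of_le_of_lt ?_ hr.2⟩
      gcongr

    have hU : dist01 f s ≤ ⨆ n : ℕ, dist01 f (s + (((n:ℝ≥0∞))+1)⁻¹) := by
      calc dist01 f s ≤ volume (⋃ n : ℕ,
            {r : ℝ | r ∈ Set.Ioo (0 : ℝ) 1 ∧ s + (((n:ℝ≥0∞))+1)⁻¹ < f r}) :=
        measure_mono hsub
      _ = ⨆ n : ℕ, dist01 f (s + (((n:ℝ≥0∞))+1)⁻¹) :=
        hmono.measure_iUnion
    have hall : ∀ n : ℕ, dist01 f (s + (((n:ℝ≥0∞))+1)⁻¹) ≤ ENNReal.ofReal t := by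
      intro n
      have hlt : nnrearr f t < s + (((n:ℝ≥0∞))+1)⁻¹ :=
        lt_of_le_of_lt hc (ENNReal.lt_add_right hstop (by simp))
      rw [nnrearr_eq] at hlt
      obtain ⟨s', hs', hs'lt⟩ := sInf_lt_iff.1 hlt
      exact le_trans (dist01_anti f hs'lt.le) hs'
    exact absurd (le_trans hU (iSup_le hall)) (not_le.2 h)


theorem nnrearr_anti (f : ℝ → ℝ≥0∞) : Antitone (nnrearr f) := by
  intro t t' h
  rw [nnrearr_eq, nnrearr_eq]
  apply sInf_le_sInf
  intro s hs
  exact le_trans hs (ENNReal.ofReal_le_ofReal h)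

theorem nnrearr_measurable (f : ℝ → ℝ≥0∞) : Measurable (nnrearr f) :=
  (nnrearr_anti f).measurable

theorem dist01_nnrearr (f : ℝ → ℝ≥0∞) (s : ℝ≥0∞) :
    dist01 (nnrearr f) s = dist01 f s := by
  have hset : {r : ℝ | r ∈ Set.Ioo (0 : ℝ) 1 ∧ s < nnrearr f r}
      = Set.Ioo (0:ℝ) (dist01 f s).toReal := by
    have hne : dist01 f s ≠ ⊤ := ne_top_of_le_ne_top (by simp) (dist01_le_one f s)
    have hle1 : (dist01 f s).toReal ≤ 1 := by
      have := ENNReal.toReal_mono (by simp) (dist01_le_one f s)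
      simpa using this
    ext r
    simp only [Set.mem_setOf_eq, Set.mem_Ioo]
    constructor
    · rintro ⟨⟨h0, _⟩, hlt⟩
      refine ⟨h0, ?_⟩
      have := lt_nnrearr_iff.1 hlt
      exact (ENNReal.ofReal_lt_iff_lt_toReal h0.le hne).1 this
    · rintro ⟨h0, hr⟩
      have hr1 : r < 1 := lt_of_lt_of_le hr hle1
      refine ⟨⟨h0, hr1⟩, lt_nnrearr_iff.2 ?_⟩
      exact (ENNReal.ofReal_lt_iff_lt_toReal h0.le hne).2 hr
  rw [dist01, hset]
  simp [Real.volume_Ioo, ENNReal.ofReal_toReal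
    (ne_top_of_le_ne_top (by simp : (1:ℝ≥0∞) ≠ ⊤) (dist01_le_one f s))]

theorem nnrearr_nnrearr (f : ℝ → ℝ≥0∞) : nnrearr (nnrearr f) = nnrearr f := by
  funext t
  rw [nnrearr_eq, nnrearr_eq]
  congr 1
  ext s
  simp [dist01_nnrearr]

theorem nnrearr_mono_of_dist01_le {f g : ℝ → ℝ≥0∞}
    (h : ∀ s, dist01 g s ≤ dist01 f s) : ∀ t, nnrearr g t ≤ nnrearr f t := by
  intro t
  rw [nnrearr_eq, nnrearr_eq]
  apply sInf_le_sInf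
  intro s hs
  exact le_trans (h s) hs

end S3

namespace RIFunctionNorm
open S3

theorem N_congr_ae (X : RIFunctionNorm) {f g : ℝ → ℝ≥0∞} (hf : Measurable f)
    (hg : Measurable g) (h : f =ᵐ[volume.restrict (Set.Ioo (0:ℝ) 1)] g) :
    X.N f = X.N g :=
  le_antisymm (X.mono f g hf hg h.le) (X.mono g f hg hf h.symm.le)

theorem N_zero (X : RIFunctionNorm) : X.N (fun _ => 0) = 0 := by
  have := X.smul_eq 0 (fun _ => 0) measurable_const
  simpa using this

theorem N_le_of_dist01_le (X : RIFunctionNorm) {g f : ℝ → ℝ≥0∞} (hg : Measurable g)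
    (hf : Measurable f) (h : ∀ s, dist01 g s ≤ dist01 f s) : X.N g ≤ X.N f := by
  have e1 : X.N g = X.N (nnrearr g) :=
    X.rearr_eq g (nnrearr g) hg (nnrearr_measurable g) (nnrearr_nnrearr g).symm
  have e2 : X.N (nnrearr f) = X.N f :=
    X.rearr_eq (nnrearr f) f (nnrearr_measurable f) hf (nnrearr_nnrearr f)
  rw [e1, ← e2]
  exact X.mono _ _ (nnrearr_measurable g) (nnrearr_measurable f)
    (Filter.Eventually.of_forall (nnrearr_mono_of_dist01_le h))

theorem N_liminf_le (X : RIFunctionNorm) {F : ℕ → ℝ → ℝ≥0∞} (hF : ∀ j, Measurable (F j))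
    {c : ℝ≥0∞} (hc : ∀ j, X.N (F j) ≤ c) :
    X.N (fun t => Filter.liminf (fun j => F j t) Filter.atTop) ≤ c := by
  set G : ℕ → ℝ → ℝ≥0∞ := fun n t => ⨅ i, ⨅ (_ : n ≤ i), F i t with hG
  have hGmeas : ∀ n, Measurable (G n) := fun n =>
    Measurable.iInf (fun i => Measurable.iInf (fun _ => hF i))
  have hGmono : ∀ t, ∀ k, G k t ≤ G (k+1) t := by
    intro t k
    exact le_iInf₂ (fun i hi => iInf₂_le i (le_trans (Nat.le_succ k) hi))
  have hGsup : ∀ t, (⨆ k, G k t) = Filter.liminf (fun j => F j t) Filter.atTop := by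
    intro t
    rw [Filter.liminf_eq_iSup_iInf_of_nat]
  have hkey := X.sup_seq G (fun t => Filter.liminf (fun j => F j t) Filter.atTop) hGmeas
    (Measurable.liminf hF)
    (Filter.Eventually.of_forall (fun t => ⟨hGmono t, hGsup t⟩))
  rw [← hkey]
  apply iSup_le
  intro k
  refine le_trans (X.mono _ _ (hGmeas k) (hF k)
    (Filter.Eventually.of_forall (fun t => iInf₂_le k le_rfl))) (hc k)

end RIFunctionNorm

namespace S3

/-- dilation of (the restriction to (0,1) of) f by factor v ∈ (0,1) -/
noncomputable def dil (f : ℝ → ℝ≥0∞) (v : ℝ) : ℝ → ℝ≥0∞ :=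
  (Set.Ioo (0:ℝ) v).indicator (fun x => f (x * v⁻¹))

theorem dil_measurable {f : ℝ → ℝ≥0∞} (hf : Measurable f) (v : ℝ) :
    Measurable (dil f v) :=
  Measurable.indicator (hf.comp (measurable_id.mul_const _)) measurableSet_Ioo

theorem dist01_dil {f : ℝ → ℝ≥0∞} (hf : Measurable f) {v : ℝ} (hv : v ∈ Set.Ioo (0:ℝ) 1)
    (s : ℝ≥0∞) : dist01 (dil f v) s ≤ dist01 f s := by
  obtain ⟨hv0, hv1⟩ := hv
  set B : Set ℝ := {y : ℝ | y ∈ Set.Ioo (0:ℝ) 1 ∧ s < f y} with hB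
  have hBmeas : MeasurableSet B := measurableSet_dist01 hf s
  have hset : {r : ℝ | r ∈ Set.Ioo (0 : ℝ) 1 ∧ s < dil f v r} = (fun r => v⁻¹ * r) ⁻¹' B := by
    ext r
    simp only [Set.mem_setOf_eq, Set.mem_preimage, hB]
    constructor
    · rintro ⟨_, hlt⟩
      by_cases hr : r ∈ Set.Ioo (0:ℝ) v
      · rw [dil, Set.indicator_of_mem hr] at hlt
        have h1 : v⁻¹ * r ∈ Set.Ioo (0:ℝ) 1 := by
          constructor
          · exact mul_pos (inv_pos.2 hv0) hr.1
          · have := (mul_lt_mul_iff_right₀ (inv_pos.2 hv0)).2 hr.2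
            rwa [inv_mul_cancel₀ hv0.ne'] at this
        exact ⟨h1, by rwa [mul_comm] at hlt⟩
      · rw [dil, Set.indicator_of_notMem hr] at hlt
        exact absurd hlt (by simp)
    · rintro ⟨hy, hlt⟩
      have hr : r ∈ Set.Ioo (0:ℝ) v := by
        constructor
        · have := mul_pos hv0 hy.1
          rwa [← mul_assoc, mul_inv_cancel₀ hv0.ne', one_mul] at this
        · have := (mul_lt_mul_iff_right₀ hv0).2 hy.2
          rwa [← mul_assoc, mul_inv_cancel₀ hv0.ne', one_mul, mul_one] at this
      refine ⟨⟨hr.1, lt_trans hr.2 hv1⟩, ?_⟩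
      rw [dil, Set.indicator_of_mem hr, mul_comm]
      exact hlt
  rw [dist01, hset]
  have hmap : volume ((fun r => v⁻¹ * r) ⁻¹' B)
      = (Measure.map (fun r => v⁻¹ * r) volume) B :=
    (Measure.map_apply (measurable_const_mul _) hBmeas).symm
  rw [hmap, Real.map_volume_mul_left (inv_ne_zero hv0.ne')]
  simp only [Measure.smul_apply, smul_eq_mul, inv_inv, abs_of_pos hv0]
  calc ENNReal.ofReal v * volume B ≤ 1 * volume B := by
        gcongr
        exact ENNReal.ofReal_le_one.2 hv1.le
  _ = dist01 f s := by rw [one_mul]; rfl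

theorem cov {s : ℝ} (hs : 0 < s) {F : ℝ → ℝ≥0∞} (hF : Measurable F) :
    ∫⁻ x in Set.Ioo (0:ℝ) s, F x
      = ENNReal.ofReal s * ∫⁻ v in Set.Ioo (0:ℝ) 1, F (s * v) := by
  have key : ∫⁻ v in Set.Ioo (0:ℝ) 1, F (s * v)
      = ENNReal.ofReal s⁻¹ * ∫⁻ x in Set.Ioo (0:ℝ) s, F x := by
    have h1 : ∀ v : ℝ, (Set.Ioo (0:ℝ) 1).indicator (fun v => F (s * v)) v
        = ((Set.Ioo (0:ℝ) s).indicator F) (s * v) := by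
      intro v
      by_cases hv : v ∈ Set.Ioo (0:ℝ) 1
      · rw [Set.indicator_of_mem hv, Set.indicator_of_mem]
        exact ⟨mul_pos hs hv.1, by nlinarith [hv.2]⟩
      · rw [Set.indicator_of_notMem hv, Set.indicator_of_notMem]
        intro hc
        exact hv ⟨by nlinarith [hc.1], by nlinarith [hc.2]⟩
    rw [← lintegral_indicator measurableSet_Ioo]
    calc ∫⁻ v, (Set.Ioo (0:ℝ) 1).indicator (fun v => F (s * v)) v
        = ∫⁻ v, ((Set.Ioo (0:ℝ) s).indicator F) (s * v) := by
          congr 1; funext v; exact h1 v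
    _ = ∫⁻ x, ((Set.Ioo (0:ℝ) s).indicator F) x ∂(Measure.map (fun v => s * v) volume) := by
          rw [lintegral_map (hF.indicator measurableSet_Ioo) (measurable_const_mul s)]
    _ = ENNReal.ofReal s⁻¹ * ∫⁻ x in Set.Ioo (0:ℝ) s, F x := by
          rw [Real.map_volume_mul_left hs.ne', lintegral_smul_measure,
            lintegral_indicator measurableSet_Ioo]
          congr 2
          rw [abs_of_pos (inv_pos.2 hs)]
  rw [key, ← mul_assoc, ← ENNReal.ofReal_mul hs.le, mul_inv_cancel₀ hs.ne', ENNReal.ofReal_one,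
    one_mul]

end S3

namespace RIFunctionNorm
open S3

/-- associate-norm style pairing bound -/
noncomputable def Nd (X : RIFunctionNorm) (ψ : ℝ → ℝ≥0∞) : ℝ≥0∞ :=
  ⨆ (h : ℝ → ℝ≥0∞) (_ : Measurable h) (_ : X.N h ≤ 1),
    ∫⁻ t in Set.Ioo (0:ℝ) 1, h t * ψ t

theorem le_Nd (X : RIFunctionNorm) {ψ h : ℝ → ℝ≥0∞} (hh : Measurable h)
    (hN : X.N h ≤ 1) : (∫⁻ t in Set.Ioo (0:ℝ) 1, h t * ψ t) ≤ X.Nd ψ :=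
  le_iSup_of_le h (le_iSup_of_le hh (le_iSup_of_le hN le_rfl))

theorem pairing (X : RIFunctionNorm) {f h ψ : ℝ → ℝ≥0∞} (hh : Measurable h)
    (hψ : Measurable ψ) (hNf0 : X.N f ≠ 0) (hNft : X.N f ≠ ⊤) (hle : X.N h ≤ X.N f) :
    (∫⁻ t in Set.Ioo (0:ℝ) 1, h t * ψ t) ≤ X.N f * X.Nd ψ := by
  set b : ℝ≥0 := (X.N f).toNNReal with hb
  have hbe : (b : ℝ≥0∞) = X.N f := ENNReal.coe_toNNReal hNft
  have hb0 : b ≠ 0 := by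
    intro hc
    rw [hc] at hbe
    exact hNf0 hbe.symm
  have hmeas' : Measurable (fun t => ((b⁻¹ : ℝ≥0) : ℝ≥0∞) * h t) :=
    (measurable_const.mul hh)
  have hN1 : X.N (fun t => ((b⁻¹ : ℝ≥0) : ℝ≥0∞) * h t) ≤ 1 := by
    rw [X.smul_eq b⁻¹ h hh]
    calc ((b⁻¹ : ℝ≥0) : ℝ≥0∞) * X.N h ≤ ((b⁻¹ : ℝ≥0) : ℝ≥0∞) * (b : ℝ≥0∞) := by
          rw [hbe]; gcongr
    _ = 1 := by
          rw [← ENNReal.coe_mul, inv_mul_cancel₀ hb0, ENNReal.coe_one]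
  have hpair := X.le_Nd hmeas' hN1 (ψ := ψ)
  have hpt : ∀ t, (b : ℝ≥0∞) * (((b⁻¹ : ℝ≥0) : ℝ≥0∞) * h t * ψ t) = h t * ψ t := by
    intro t
    rw [ENNReal.coe_inv hb0, ← mul_assoc, ← mul_assoc,
      ENNReal.mul_inv_cancel (by exact_mod_cast hb0) ENNReal.coe_ne_top, one_mul]
  have hcalc : (b : ℝ≥0∞) * (∫⁻ t in Set.Ioo (0:ℝ) 1, ((b⁻¹ : ℝ≥0) : ℝ≥0∞) * h t * ψ t)
      = ∫⁻ t in Set.Ioo (0:ℝ) 1, h t * ψ t := by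
    rw [← lintegral_const_mul _ (f := fun t => ((b⁻¹ : ℝ≥0) : ℝ≥0∞) * h t * ψ t) (hmeas'.mul hψ)]
    simp_rw [hpt]
  rw [← hcalc, ← hbe]
  exact mul_le_mul_right hpair _

end RIFunctionNorm

namespace S3

noncomputable def Tfun (γ : ℝ) (f : ℝ → ℝ≥0∞) : ℝ → ℝ≥0∞ :=
  fun r => ENNReal.ofReal (r ^ (1 - γ)) *
    ∫⁻ s in Set.Ioo r (1 : ℝ), ENNReal.ofReal (s ^ (γ - 2)) * f s

theorem Tfun_measurable (γ : ℝ) (f : ℝ → ℝ≥0∞) : Measurable (Tfun γ f) := by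
  have hanti : Antitone (fun r => ∫⁻ s in Set.Ioo r (1:ℝ),
      ENNReal.ofReal (s ^ (γ - 2)) * f s) := by
    intro a b hab
    exact lintegral_mono_set (fun s hs => ⟨lt_of_le_of_lt hab hs.1, hs.2⟩)
  exact (((measurable_id'.pow_const _)).ennreal_ofReal).mul hanti.measurable

/-- the inner kernel as a function on the product, for the first Fubini swap -/
noncomputable def Vker (γ : ℝ) (f ψ : ℝ → ℝ≥0∞) : ℝ × ℝ → ℝ≥0∞ :=
  fun q => {q : ℝ × ℝ | q.1 < q.2}.indicator
    (fun q => ENNReal.ofReal (q.1 ^ (1-γ)) *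
      (ENNReal.ofReal (q.2 ^ (γ-2)) * f q.2) * ψ q.1) q

theorem Vker_measurable {γ : ℝ} {f ψ : ℝ → ℝ≥0∞} (hf : Measurable f) (hψ : Measurable ψ) :
    Measurable (Vker γ f ψ) := by
  apply Measurable.indicator
  · exact (((measurable_fst.pow_const _).ennreal_ofReal).mul
      (((measurable_snd.pow_const _).ennreal_ofReal).mul (hf.comp measurable_snd))).mul
      (hψ.comp measurable_fst)
  · exact measurableSet_lt measurable_fst measurable_snd

theorem stepA {γ : ℝ} {f ψ : ℝ → ℝ≥0∞} (hf : Measurable f) {r : ℝ}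
    (hr : r ∈ Set.Ioo (0:ℝ) 1) :
    Tfun γ f r * ψ r = ∫⁻ s in Set.Ioo (0:ℝ) 1, Vker γ f ψ (r, s) := by
  have h1 : ∀ s : ℝ, Vker γ f ψ (r, s) = (Set.Ioi r).indicator
      (fun s => ENNReal.ofReal (r ^ (1-γ)) *
        (ENNReal.ofReal (s ^ (γ-2)) * f s) * ψ r) s := by
    intro s
    simp only [Vker, Set.indicator_apply, Set.mem_setOf_eq, Set.mem_Ioi]
  rw [(lintegral_congr h1 : (∫⁻ s in Set.Ioo (0:ℝ) 1, Vker γ f ψ (r, s)) = _)]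
  rw [lintegral_indicator measurableSet_Ioi, Measure.restrict_restrict measurableSet_Ioi]
  have hset : Set.Ioi r ∩ Set.Ioo (0:ℝ) 1 = Set.Ioo r 1 := by
    ext x
    simp only [Set.mem_inter_iff, Set.mem_Ioi, Set.mem_Ioo]
    exact ⟨fun ⟨h1, h2⟩ => ⟨h1, h2.2⟩, fun ⟨h1, h2⟩ => ⟨h1, lt_trans hr.1 h1, h2⟩⟩
  rw [hset]
  rw [lintegral_mul_const _ (f := fun s =>
        ENNReal.ofReal (r ^ (1-γ)) * (ENNReal.ofReal (s ^ (γ-2)) * f s)) ((measurable_const.mul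
    (((measurable_id'.pow_const _).ennreal_ofReal).mul hf)) : Measurable fun s =>
      ENNReal.ofReal (r ^ (1-γ)) * (ENNReal.ofReal (s ^ (γ-2)) * f s)),
    lintegral_const_mul _ (f := fun s => ENNReal.ofReal (s ^ (γ-2)) * f s) (((measurable_id'.pow_const _).ennreal_ofReal).mul hf)]
  rw [Tfun]

noncomputable def Wker (γ : ℝ) (f ψ : ℝ → ℝ≥0∞) : ℝ × ℝ → ℝ≥0∞ :=
  fun q => ENNReal.ofReal (q.2 ^ (1-γ)) * (f q.1 * ψ (q.1 * q.2))

theorem Wker_measurable {γ : ℝ} {f ψ : ℝ → ℝ≥0∞} (hf : Measurable f) (hψ : Measurable ψ) :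
    Measurable (Wker γ f ψ) :=
  ((measurable_snd.pow_const _).ennreal_ofReal).mul
    ((hf.comp measurable_fst).mul (hψ.comp (measurable_fst.mul measurable_snd)))

theorem stepB {γ : ℝ} {f ψ : ℝ → ℝ≥0∞} (hf : Measurable f) (hψ : Measurable ψ) {s : ℝ}
    (hs : s ∈ Set.Ioo (0:ℝ) 1) :
    (∫⁻ r in Set.Ioo (0:ℝ) 1, Vker γ f ψ (r, s))
      = ∫⁻ v in Set.Ioo (0:ℝ) 1, Wker γ f ψ (s, v) := by
  have hψs : Measurable fun v : ℝ => ψ (s * v) := hψ.comp (measurable_const_mul s)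
  have h1 : ∀ r : ℝ, Vker γ f ψ (r, s) = (Set.Iio s).indicator
      (fun r => (ENNReal.ofReal (s ^ (γ-2)) * f s) * (ENNReal.ofReal (r ^ (1-γ)) * ψ r)) r := by
    intro r
    simp only [Vker, Set.indicator_apply, Set.mem_setOf_eq, Set.mem_Iio]
    by_cases h : r < s
    · simp only [if_pos h]; ring
    · simp only [if_neg h]
  rw [(lintegral_congr h1 : (∫⁻ r in Set.Ioo (0:ℝ) 1, Vker γ f ψ (r, s)) = _),
    lintegral_indicator measurableSet_Iio, Measure.restrict_restrict measurableSet_Iio]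
  have hset : Set.Iio s ∩ Set.Ioo (0:ℝ) 1 = Set.Ioo 0 s := by
    ext x
    simp only [Set.mem_inter_iff, Set.mem_Iio, Set.mem_Ioo]
    exact ⟨fun ⟨h1, h2⟩ => ⟨h2.1, h1⟩, fun ⟨h1, h2⟩ => ⟨h2, h1, lt_trans h2 hs.2⟩⟩
  rw [hset, lintegral_const_mul _ (f := fun x => ENNReal.ofReal (x ^ (1-γ)) * ψ x) (((measurable_id'.pow_const _).ennreal_ofReal).mul hψ),
    cov hs.1 (F := fun x => ENNReal.ofReal (x ^ (1-γ)) * ψ x) (((measurable_id'.pow_const _).ennreal_ofReal).mul hψ)]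
  have h3 : ∀ v ∈ Set.Ioo (0:ℝ) 1,
      (fun x => ENNReal.ofReal (x ^ (1-γ)) * ψ x) (s * v)
        = ENNReal.ofReal (s ^ (1-γ)) * (ENNReal.ofReal (v ^ (1-γ)) * ψ (s * v)) := by
    intro v hv
    simp only
    rw [Real.mul_rpow hs.1.le hv.1.le, ENNReal.ofReal_mul (Real.rpow_nonneg hs.1.le _), mul_assoc]
  rw [setLIntegral_congr_fun measurableSet_Ioo h3,
    lintegral_const_mul _ (f := fun v => ENNReal.ofReal (v ^ (1-γ)) * ψ (s * v)) (((measurable_id'.pow_const _).ennreal_ofReal).mul hψs)]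
  have hscal : ENNReal.ofReal (s ^ (γ-2)) * (ENNReal.ofReal s * ENNReal.ofReal (s ^ (1-γ)))
      = 1 := by
    rw [← ENNReal.ofReal_mul hs.1.le, ← ENNReal.ofReal_mul (Real.rpow_nonneg hs.1.le _)]
    have hr : s ^ (γ-2) * (s * s ^ (1-γ)) = 1 := by
      have e1 : s * s ^ (1-γ) = s ^ (1-γ+1) := by
        rw [Real.rpow_add_one hs.1.ne']; ring
      rw [e1, ← Real.rpow_add hs.1]
      have : γ - 2 + (1 - γ + 1) = 0 := by ring
      rw [this, Real.rpow_zero]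
    rw [hr, ENNReal.ofReal_one]
  set J := ∫⁻ v in Set.Ioo (0:ℝ) 1, ENNReal.ofReal (v ^ (1-γ)) * ψ (s * v) with hJ
  have hcollect : ENNReal.ofReal (s ^ (γ-2)) * f s * (ENNReal.ofReal s
      * (ENNReal.ofReal (s ^ (1-γ)) * J)) = f s * J := by
    calc ENNReal.ofReal (s ^ (γ-2)) * f s * (ENNReal.ofReal s
        * (ENNReal.ofReal (s ^ (1-γ)) * J))
        = (ENNReal.ofReal (s ^ (γ-2)) * (ENNReal.ofReal s * ENNReal.ofReal (s ^ (1-γ))))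
          * (f s * J) := by ring
    _ = f s * J := by rw [hscal, one_mul]
  rw [hcollect, hJ, ← lintegral_const_mul _ (f := fun v => ENNReal.ofReal (v ^ (1-γ)) * ψ (s * v)) (((measurable_id'.pow_const _).ennreal_ofReal).mul hψs)]
  apply lintegral_congr
  intro v
  simp only [Wker]
  ring

theorem stepC (X : RIFunctionNorm) {γ : ℝ} {f ψ : ℝ → ℝ≥0∞} (hf : Measurable f)
    (hψ : Measurable ψ) (hNf0 : X.N f ≠ 0) (hNft : X.N f ≠ ⊤) {v : ℝ}
    (hv : v ∈ Set.Ioo (0:ℝ) 1) :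
    (∫⁻ s in Set.Ioo (0:ℝ) 1, Wker γ f ψ (s, v))
      ≤ ENNReal.ofReal (v ^ (-γ)) * (X.N f * X.Nd ψ) := by
  have hψv : Measurable fun s : ℝ => ψ (s * v) := hψ.comp (measurable_mul_const v)
  have hWint : (∫⁻ s in Set.Ioo (0:ℝ) 1, Wker γ f ψ (s, v))
      = ENNReal.ofReal (v ^ (1-γ)) * ∫⁻ s in Set.Ioo (0:ℝ) 1, f s * ψ (s * v) := by
    rw [← lintegral_const_mul _ (f := fun s => f s * ψ (s * v)) (hf.mul hψv)]
    exact lintegral_congr (fun s => by simp only [Wker])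
  have hFm : Measurable fun x : ℝ => f (x * v⁻¹) * ψ x :=
    (hf.comp (measurable_mul_const v⁻¹)).mul hψ
  have hcov := cov hv.1 hFm
  have h5 : ∀ s : ℝ, f (v * s * v⁻¹) * ψ (v * s) = f s * ψ (s * v) := by
    intro s
    rw [mul_comm v s, mul_assoc, mul_inv_cancel₀ hv.1.ne', mul_one]
  have hcov2 : (∫⁻ x in Set.Ioo (0:ℝ) v, f (x * v⁻¹) * ψ x)
      = ENNReal.ofReal v * ∫⁻ s in Set.Ioo (0:ℝ) 1, f s * ψ (s * v) := by
    rw [hcov]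
    congr 1
    exact lintegral_congr h5
  have h6 : ∀ x : ℝ, (Set.Ioo (0:ℝ) v).indicator (fun x => f (x * v⁻¹) * ψ x) x
      = dil f v x * ψ x := by
    intro x
    rw [dil]
    by_cases hx : x ∈ Set.Ioo (0:ℝ) v
    · rw [Set.indicator_of_mem hx, Set.indicator_of_mem hx]
    · rw [Set.indicator_of_notMem hx, Set.indicator_of_notMem hx, zero_mul]
  have h7 : (∫⁻ x in Set.Ioo (0:ℝ) 1, dil f v x * ψ x)
      = ∫⁻ x in Set.Ioo (0:ℝ) v, f (x * v⁻¹) * ψ x := by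
    rw [← (lintegral_congr h6 : (∫⁻ x in Set.Ioo (0:ℝ) 1,
        (Set.Ioo (0:ℝ) v).indicator (fun x => f (x * v⁻¹) * ψ x) x) = _),
      lintegral_indicator measurableSet_Ioo, Measure.restrict_restrict measurableSet_Ioo,
      Set.inter_eq_left.2 (Set.Ioo_subset_Ioo le_rfl hv.2.le)]
  have hpairing : (∫⁻ x in Set.Ioo (0:ℝ) 1, dil f v x * ψ x) ≤ X.N f * X.Nd ψ :=
    X.pairing (dil_measurable hf v) hψ hNf0 hNft
      (X.N_le_of_dist01_le (dil_measurable hf v) hf (dist01_dil hf hv))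
  have hkey : (∫⁻ s in Set.Ioo (0:ℝ) 1, f s * ψ (s * v))
      ≤ ENNReal.ofReal v⁻¹ * (X.N f * X.Nd ψ) := by
    have hvv : ENNReal.ofReal v⁻¹ * ENNReal.ofReal v = 1 := by
      rw [← ENNReal.ofReal_mul (inv_nonneg.2 hv.1.le), inv_mul_cancel₀ hv.1.ne', ENNReal.ofReal_one]
    calc (∫⁻ s in Set.Ioo (0:ℝ) 1, f s * ψ (s * v))
        = ENNReal.ofReal v⁻¹ * (ENNReal.ofReal v
          * ∫⁻ s in Set.Ioo (0:ℝ) 1, f s * ψ (s * v)) := by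
          rw [← mul_assoc, hvv, one_mul]
    _ = ENNReal.ofReal v⁻¹ * ∫⁻ x in Set.Ioo (0:ℝ) 1, dil f v x * ψ x := by
          rw [← hcov2, h7]
    _ ≤ ENNReal.ofReal v⁻¹ * (X.N f * X.Nd ψ) := mul_le_mul_right hpairing _
  have hpow : ENNReal.ofReal (v ^ (1-γ)) * ENNReal.ofReal v⁻¹ = ENNReal.ofReal (v ^ (-γ)) := by
    rw [← ENNReal.ofReal_mul (Real.rpow_nonneg hv.1.le _), ← Real.rpow_neg_one v, ← Real.rpow_add hv.1]
    congr 1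
    ring_nf
  calc (∫⁻ s in Set.Ioo (0:ℝ) 1, Wker γ f ψ (s, v))
      = ENNReal.ofReal (v ^ (1-γ)) * ∫⁻ s in Set.Ioo (0:ℝ) 1, f s * ψ (s * v) := hWint
  _ ≤ ENNReal.ofReal (v ^ (1-γ)) * (ENNReal.ofReal v⁻¹ * (X.N f * X.Nd ψ)) :=
      mul_le_mul_right hkey _
  _ = ENNReal.ofReal (v ^ (-γ)) * (X.N f * X.Nd ψ) := by rw [← mul_assoc, hpow]

theorem stepD {γ : ℝ} (hγ : γ < 1) :
    (∫⁻ v in Set.Ioo (0:ℝ) 1, ENNReal.ofReal (v ^ (-γ)))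
      = ENNReal.ofReal (1 / (1 - γ)) := by
  have h1γ : (0:ℝ) < 1 - γ := by linarith
  have hint : ∫ x in (0:ℝ)..1, x ^ (-γ) = 1 / (1 - γ) := by
    rw [integral_rpow (Or.inl (by linarith : (-1:ℝ) < -γ))]
    rw [Real.one_rpow, Real.zero_rpow (by intro hc; linarith : -γ + 1 ≠ 0)]
    rw [show -γ + 1 = 1 - γ by ring]
    norm_num
  have hii : IntervalIntegrable (fun x : ℝ => x ^ (-γ)) volume 0 1 :=
    intervalIntegral.intervalIntegrable_rpow' (by linarith)
  have hInt : IntegrableOn (fun x : ℝ => x ^ (-γ)) (Set.Ioc (0:ℝ) 1) volume := by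
    rw [← intervalIntegrable_iff_integrableOn_Ioc_of_le zero_le_one]
    exact hii
  have heq : ENNReal.ofReal (∫ v in Set.Ioc (0:ℝ) 1, v ^ (-γ))
      = ∫⁻ v in Set.Ioc (0:ℝ) 1, ENNReal.ofReal (v ^ (-γ)) :=
    ofReal_integral_eq_lintegral_ofReal hInt
      ((ae_restrict_iff' measurableSet_Ioc).2 (Filter.Eventually.of_forall
        (fun x hx => Real.rpow_nonneg hx.1.le _)))
  have hoo : (∫⁻ v in Set.Ioo (0:ℝ) 1, ENNReal.ofReal (v ^ (-γ)))
      = ∫⁻ v in Set.Ioc (0:ℝ) 1, ENNReal.ofReal (v ^ (-γ)) :=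
    setLIntegral_congr MeasureTheory.Ioo_ae_eq_Ioc
  rw [hoo, ← heq]
  congr 1
  rw [← hint, intervalIntegral.integral_of_le zero_le_one]

theorem dual_bound (X : RIFunctionNorm) {γ : ℝ} (hγ : γ < 1) {f ψ : ℝ → ℝ≥0∞}
    (hf : Measurable f) (hψ : Measurable ψ) (hNf0 : X.N f ≠ 0) (hNft : X.N f ≠ ⊤) :
    (∫⁻ r in Set.Ioo (0:ℝ) 1, Tfun γ f r * ψ r)
      ≤ (ENNReal.ofReal (1 / (1 - γ)) * X.N f) * X.Nd ψ := by
  have hswap1 : (∫⁻ r in Set.Ioo (0:ℝ) 1, ∫⁻ s in Set.Ioo (0:ℝ) 1, Vker γ f ψ (r, s))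
      = ∫⁻ s in Set.Ioo (0:ℝ) 1, ∫⁻ r in Set.Ioo (0:ℝ) 1, Vker γ f ψ (r, s) :=
    lintegral_lintegral_swap (Vker_measurable hf hψ).aemeasurable
  have hswap2 : (∫⁻ s in Set.Ioo (0:ℝ) 1, ∫⁻ v in Set.Ioo (0:ℝ) 1, Wker γ f ψ (s, v))
      = ∫⁻ v in Set.Ioo (0:ℝ) 1, ∫⁻ s in Set.Ioo (0:ℝ) 1, Wker γ f ψ (s, v) :=
    lintegral_lintegral_swap (Wker_measurable hf hψ).aemeasurable
  calc (∫⁻ r in Set.Ioo (0:ℝ) 1, Tfun γ f r * ψ r)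
      = ∫⁻ r in Set.Ioo (0:ℝ) 1, ∫⁻ s in Set.Ioo (0:ℝ) 1, Vker γ f ψ (r, s) :=
        setLIntegral_congr_fun measurableSet_Ioo
          (fun r hr => stepA hf hr)
  _ = ∫⁻ s in Set.Ioo (0:ℝ) 1, ∫⁻ r in Set.Ioo (0:ℝ) 1, Vker γ f ψ (r, s) := hswap1
  _ = ∫⁻ s in Set.Ioo (0:ℝ) 1, ∫⁻ v in Set.Ioo (0:ℝ) 1, Wker γ f ψ (s, v) :=
        setLIntegral_congr_fun measurableSet_Ioo
          (fun s hs => stepB hf hψ hs)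
  _ = ∫⁻ v in Set.Ioo (0:ℝ) 1, ∫⁻ s in Set.Ioo (0:ℝ) 1, Wker γ f ψ (s, v) := hswap2
  _ ≤ ∫⁻ v in Set.Ioo (0:ℝ) 1, ENNReal.ofReal (v ^ (-γ)) * (X.N f * X.Nd ψ) := by
        apply lintegral_mono_ae
        exact (ae_restrict_iff' measurableSet_Ioo).2 (Filter.Eventually.of_forall
          (fun v hv => stepC X hf hψ hNf0 hNft hv))
  _ = (∫⁻ v in Set.Ioo (0:ℝ) 1, ENNReal.ofReal (v ^ (-γ))) * (X.N f * X.Nd ψ) :=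
        lintegral_mul_const _ ((measurable_id'.pow_const _).ennreal_ofReal)
  _ = (ENNReal.ofReal (1 / (1 - γ)) * X.N f) * X.Nd ψ := by rw [stepD hγ, mul_assoc]

end S3


namespace S3

theorem iSup_min_nat (x : ℝ≥0∞) : (⨆ m : ℕ, min x (m : ℝ≥0∞)) = x := by
  apply le_antisymm (iSup_le fun m => min_le_left _ _)
  rcases eq_or_ne x ⊤ with hx | hx
  · rw [hx]
    have h1 : ∀ m : ℕ, min (⊤:ℝ≥0∞) (m:ℝ≥0∞) = (m:ℝ≥0∞) := fun m => min_eq_right le_top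
    calc (⊤:ℝ≥0∞) = ⨆ m : ℕ, (m:ℝ≥0∞) := by
          apply le_antisymm _ le_top
          by_contra hc
          push_neg at hc
          obtain ⟨n, hn⟩ := ENNReal.exists_nat_gt (LT.lt.ne hc)
          exact absurd (le_iSup (fun m : ℕ => (m:ℝ≥0∞)) n) (not_le.2 hn)
    _ ≤ ⨆ m : ℕ, min (⊤:ℝ≥0∞) (m:ℝ≥0∞) := by simp [h1]
  · obtain ⟨n, hn⟩ := ENNReal.exists_nat_gt hx
    exact le_iSup_of_le n (le_of_eq (min_eq_left hn.le).symm)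

end S3

namespace RIFunctionNorm
open S3

set_option synthInstance.maxHeartbeats 1000000 in
set_option maxHeartbeats 1000000 in
theorem N_le_of_dual_bound (X : RIFunctionNorm) {g : ℝ → ℝ≥0∞} (hg : Measurable g)
    {c : ℝ≥0∞} (hc0 : c ≠ 0) (hct : c ≠ ⊤)
    (hdual : ∀ ψ : ℝ → ℝ≥0∞, Measurable ψ →
      (∫⁻ t in Set.Ioo (0:ℝ) 1, g t * ψ t) ≤ c * X.Nd ψ) :
    X.N g ≤ c := by
  by_contra hgt
  push_neg at hgt
  set μ := volume.restrict (Set.Ioo (0:ℝ) 1) with hμ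
  haveI : IsFiniteMeasure μ := ⟨by
    rw [hμ, Measure.restrict_apply_univ]
    simp⟩
  -- truncation with norm still > c
  have htrunc : (⨆ n : ℕ, X.N (fun t => min (g t) (n:ℝ≥0∞))) = X.N g := by
    apply X.sup_seq _ _ (fun n => hg.min measurable_const) hg
    refine Filter.Eventually.of_forall (fun t => ⟨fun k => ?_, iSup_min_nat (g t)⟩)
    exact min_le_min le_rfl (by exact_mod_cast Nat.le_succ k)
  obtain ⟨n, hn⟩ : ∃ n : ℕ, c < X.N (fun t => min (g t) (n:ℝ≥0∞)) := by
    rw [← htrunc] at hgt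
    exact lt_iSup_iff.1 hgt
  set gn : ℝ → ℝ≥0∞ := fun t => min (g t) (n:ℝ≥0∞) with hgn
  have hgn_meas : Measurable gn := hg.min measurable_const
  have hgn_ne_top : ∀ t, gn t ≠ ⊤ := fun t =>
    ne_top_of_le_ne_top (ENNReal.natCast_ne_top n) (min_le_right _ _)
  set G : ℝ → ℝ := fun t => (gn t).toReal with hG
  have hG_meas : Measurable G := hgn_meas.ennreal_toReal
  have hG_nonneg : ∀ t, 0 ≤ G t := fun t => ENNReal.toReal_nonneg
  have hG_bd : ∀ t, ‖G t‖ ≤ (n:ℝ) := fun t => by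
    rw [Real.norm_eq_abs, abs_of_nonneg (hG_nonneg t)]
    have := ENNReal.toReal_mono (ENNReal.natCast_ne_top n) (min_le_right (g t) (n:ℝ≥0∞))
    simpa using this
  have hGmem : MemLp G 2 μ :=
    MemLp.of_bound hG_meas.aestronglyMeasurable _ (Filter.Eventually.of_forall hG_bd)
  set Glp : Lp ℝ 2 μ := MemLp.toLp G hGmem with hGlp
  -- the convex set
  set K : Set (Lp ℝ 2 μ) := {h | ∃ F : ℝ → ℝ≥0∞, Measurable F ∧
    (∀ᵐ t ∂μ, ENNReal.ofReal (h t) ≤ F t) ∧ X.N F ≤ c} with hK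
  have hGnotK : Glp ∉ K := by
    rintro ⟨F, hFmeas, hFle, hFN⟩
    have h1 : ∀ᵐ t ∂μ, gn t ≤ F t := by
      filter_upwards [hFle, MemLp.coeFn_toLp hGmem] with t h1 h2
      rw [hGlp, h2, hG] at h1
      rwa [ENNReal.ofReal_toReal (hgn_ne_top t)] at h1
    exact absurd (le_trans (X.mono gn F hgn_meas hFmeas h1) hFN) (not_le.2 hn)
  have hKconv : Convex ℝ K := by
    rintro h₁ ⟨F₁, hF₁m, hF₁le, hF₁N⟩ h₂ ⟨F₂, hF₂m, hF₂le, hF₂N⟩ a b ha hb hab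
    refine ⟨fun t => ENNReal.ofReal a * F₁ t + ENNReal.ofReal b * F₂ t,
      (measurable_const.mul hF₁m).add (measurable_const.mul hF₂m), ?_, ?_⟩
    · have hadd : ⇑(a • h₁ + b • h₂) =ᵐ[μ] fun t => a * h₁ t + b * h₂ t := by
        filter_upwards [Lp.coeFn_add (a • h₁) (b • h₂), Lp.coeFn_smul a h₁,
          Lp.coeFn_smul b h₂] with t ht hs1 hs2
        rw [ht]
        simp [hs1, hs2]
      filter_upwards [hadd, hF₁le, hF₂le] with t ht h1 h2
      rw [ht]
      calc ENNReal.ofReal (a * h₁ t + b * h₂ t)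
          ≤ ENNReal.ofReal (a * h₁ t) + ENNReal.ofReal (b * h₂ t) := ENNReal.ofReal_add_le
      _ = ENNReal.ofReal a * ENNReal.ofReal (h₁ t)
            + ENNReal.ofReal b * ENNReal.ofReal (h₂ t) := by
          rw [ENNReal.ofReal_mul ha, ENNReal.ofReal_mul hb]
      _ ≤ ENNReal.ofReal a * F₁ t + ENNReal.ofReal b * F₂ t := by gcongr
    · have e1 : ENNReal.ofReal a = ((a.toNNReal : ℝ≥0) : ℝ≥0∞) := rfl
      have e2 : ENNReal.ofReal b = ((b.toNNReal : ℝ≥0) : ℝ≥0∞) := rfl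
      calc X.N (fun t => ENNReal.ofReal a * F₁ t + ENNReal.ofReal b * F₂ t)
          ≤ X.N (fun t => ENNReal.ofReal a * F₁ t) + X.N (fun t => ENNReal.ofReal b * F₂ t) :=
            X.add_le _ _ (measurable_const.mul hF₁m) (measurable_const.mul hF₂m)
      _ = ENNReal.ofReal a * X.N F₁ + ENNReal.ofReal b * X.N F₂ := by
            rw [e1, e2, X.smul_eq _ _ hF₁m, X.smul_eq _ _ hF₂m]
      _ ≤ ENNReal.ofReal a * c + ENNReal.ofReal b * c := by gcongr
      _ = (ENNReal.ofReal a + ENNReal.ofReal b) * c := by ring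
      _ = c := by
            rw [← ENNReal.ofReal_add ha hb, hab, ENNReal.ofReal_one, one_mul]
  have hKclosed : IsClosed K := by
    apply IsSeqClosed.isClosed
    intro hseq h hmem hlim
    have htim : TendstoInMeasure μ (fun k => ⇑(hseq k)) Filter.atTop ⇑h :=
      tendstoInMeasure_of_tendsto_Lp hlim
    obtain ⟨ns, -, hae⟩ := htim.exists_seq_tendsto_ae
    choose F hFm hFle hFN using fun k => hmem (ns k)
    refine ⟨fun t => Filter.liminf (fun j => F j t) Filter.atTop,
      Measurable.liminf hFm, ?_, X.N_liminf_le hFm hFN⟩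
    have hallle : ∀ᵐ t ∂μ, ∀ j, ENNReal.ofReal (hseq (ns j) t) ≤ F j t :=
      MeasureTheory.ae_all_iff.2 hFle
    filter_upwards [hae, hallle] with t ht hle2
    have hconv : Filter.Tendsto (fun j => ENNReal.ofReal (hseq (ns j) t)) Filter.atTop
        (nhds (ENNReal.ofReal (h t))) :=
      (ENNReal.continuous_ofReal.tendsto _).comp ht
    rw [← hconv.liminf_eq]
    exact Filter.liminf_le_liminf (Filter.Eventually.of_forall hle2)
  obtain ⟨Flin, u, hsep⟩ := geometric_hahn_banach_closed_point hKconv hKclosed hGnotK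
  set φ := (InnerProductSpace.toDual ℝ (Lp ℝ 2 μ)).symm Flin with hφdef
  have hφ : ∀ x : Lp ℝ 2 μ, inner ℝ φ x = Flin x := fun x => InnerProductSpace.toDual_symm_apply
  have hinner : ∀ x : Lp ℝ 2 μ, Flin x = ∫ a, (⇑φ a) * (⇑x a) ∂μ := by
    intro x
    rw [← hφ x, MeasureTheory.L2.inner_def]
    congr 1; funext a; simp [mul_comm]
  -- measurable representative of φ
  set ψ₀ : ℝ → ℝ := (Lp.aestronglyMeasurable φ).mk ⇑φ with hψ₀def
  have hψ₀m : Measurable ψ₀ :=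
    (Lp.aestronglyMeasurable φ).stronglyMeasurable_mk.measurable
  have hψ₀ae : ⇑φ =ᵐ[μ] ψ₀ := (Lp.aestronglyMeasurable φ).ae_eq_mk
  have hψ₀int : Integrable ψ₀ μ :=
    ((Lp.memLp φ).integrable (by norm_num)).congr hψ₀ae
  set ψ : ℝ → ℝ≥0∞ := fun t => ENNReal.ofReal |ψ₀ t| with hψdef
  have hψm : Measurable ψ := ((continuous_abs.measurable).comp hψ₀m).ennreal_ofReal
  have hu0 : 0 < u := by
    have h0K : (0 : Lp ℝ 2 μ) ∈ K := by
      refine ⟨fun _ => 0, measurable_const, ?_, by rw [X.N_zero]; exact zero_le⟩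
      filter_upwards [Lp.coeFn_zero ℝ 2 μ] with t ht
      rw [ht]
      simp
    have := hsep.1 0 h0K
    rwa [map_zero] at this
  -- Claim A
  have claimA : ∀ h : ℝ → ℝ≥0∞, Measurable h → X.N h ≤ c →
      (∫⁻ t in Set.Ioo (0:ℝ) 1, h t * ψ t) ≤ ENNReal.ofReal u := by
    intro h hh hNh
    have key : ∀ m : ℕ, (∫⁻ t, min (h t) (m:ℝ≥0∞) * ψ t ∂μ) ≤ ENNReal.ofReal u := by
      intro m
      set hm : ℝ → ℝ≥0∞ := fun t => min (h t) (m:ℝ≥0∞) with hhm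
      have hhm_meas : Measurable hm := hh.min measurable_const
      have hhm_ne_top : ∀ t, hm t ≠ ⊤ := fun t =>
        ne_top_of_le_ne_top (ENNReal.natCast_ne_top m) (min_le_right _ _)
      set Hm : ℝ → ℝ := fun t => (hm t).toReal * (if ψ₀ t < 0 then (-1:ℝ) else 1) with hHmdef
      have hHm_meas : Measurable Hm :=
        (hhm_meas.ennreal_toReal).mul
          (Measurable.ite (measurableSet_lt hψ₀m measurable_const)
            measurable_const measurable_const)
      have hHm_bd : ∀ t, ‖Hm t‖ ≤ (m:ℝ) := by
        intro t
        rw [hHmdef, Real.norm_eq_abs, abs_mul]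
        have h1 : |(hm t).toReal| ≤ (m:ℝ) := by
          rw [abs_of_nonneg ENNReal.toReal_nonneg]
          have := ENNReal.toReal_mono (ENNReal.natCast_ne_top m) (min_le_right (h t) (m:ℝ≥0∞))
          simpa using this
        have h2 : |(if ψ₀ t < 0 then (-1:ℝ) else 1)| = 1 := by
          by_cases hc : ψ₀ t < 0 <;> simp [hc]
        rw [h2, mul_one]
        exact h1
      have hHmmem : MemLp Hm 2 μ :=
        MemLp.of_bound hHm_meas.aestronglyMeasurable _ (Filter.Eventually.of_forall hHm_bd)
      set Am := (MemLp.toLp Hm hHmmem : Lp ℝ 2 μ) with hAm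
      have hAmK : Am ∈ K := by
        refine ⟨hm, hhm_meas, ?_, le_trans (X.mono hm h hhm_meas hh
          (Filter.Eventually.of_forall (fun t => min_le_left _ _))) hNh⟩
        filter_upwards [MemLp.coeFn_toLp hHmmem] with t ht
        rw [hAm, ht, hHmdef]
        by_cases hc : ψ₀ t < 0
        · simp only [if_pos hc, mul_neg_one]
          rw [ENNReal.ofReal_of_nonpos (neg_nonpos.2 ENNReal.toReal_nonneg)]
          exact zero_le
        · simp only [if_neg hc, mul_one]
          rw [ENNReal.ofReal_toReal (hhm_ne_top t)]
      have hlt := hsep.1 Am hAmK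
      rw [hinner Am] at hlt
      have hint_eq : (∫ a, (⇑φ a) * (⇑Am a) ∂μ) = ∫ a, (hm a).toReal * |ψ₀ a| ∂μ := by
        apply integral_congr_ae
        filter_upwards [hψ₀ae, MemLp.coeFn_toLp hHmmem] with a h1 h2
        rw [hAm, h2, h1, hHmdef]
        by_cases hc : ψ₀ a < 0
        · simp only [if_pos hc, mul_neg_one, abs_of_neg hc]
          ring
        · simp only [if_neg hc, mul_one, abs_of_nonneg (not_lt.1 hc)]
          ring
      have hint : Integrable (fun a => (hm a).toReal * |ψ₀ a|) μ := by
        apply Integrable.bdd_mul (c := (m:ℝ)) hψ₀int.abs (hhm_meas.ennreal_toReal).aestronglyMeasurable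
        refine Filter.Eventually.of_forall (fun t => ?_)
        rw [Real.norm_eq_abs, abs_of_nonneg ENNReal.toReal_nonneg]
        have := ENNReal.toReal_mono (ENNReal.natCast_ne_top m) (min_le_right (h t) (m:ℝ≥0∞))
        simpa using this
      have hofReal : (∫⁻ t, hm t * ψ t ∂μ)
          = ENNReal.ofReal (∫ a, (hm a).toReal * |ψ₀ a| ∂μ) := by
        rw [ofReal_integral_eq_lintegral_ofReal hint (Filter.Eventually.of_forall
          (fun a => mul_nonneg ENNReal.toReal_nonneg (abs_nonneg _)))]
        apply lintegral_congr
        intro a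
        rw [ENNReal.ofReal_mul ENNReal.toReal_nonneg, ENNReal.ofReal_toReal (hhm_ne_top a)]
      rw [hofReal]
      apply ENNReal.ofReal_le_ofReal
      rw [← hint_eq]
      exact hlt.le
    -- monotone limit in m
    have hsup : (∫⁻ t, h t * ψ t ∂μ) = ⨆ m : ℕ, ∫⁻ t, min (h t) (m:ℝ≥0∞) * ψ t ∂μ := by
      rw [← lintegral_iSup (f := fun m t => min (h t) (m:ℝ≥0∞) * ψ t) (fun m => (hh.min measurable_const).mul hψm)
        (fun i j hij => fun t => mul_le_mul_left
          (min_le_min le_rfl (by exact_mod_cast hij)) _)]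
      apply lintegral_congr
      intro t
      rw [← ENNReal.iSup_mul, iSup_min_nat]
    rw [hsup]
    exact iSup_le key
  -- Claim B
  have hGint : Integrable G μ := hGmem.integrable (by norm_num)
  have hint2 : Integrable (fun a => G a * |ψ₀ a|) μ :=
    Integrable.bdd_mul hψ₀int.abs hG_meas.aestronglyMeasurable (Filter.Eventually.of_forall hG_bd)
  have hB : ENNReal.ofReal u < ∫⁻ t, gn t * ψ t ∂μ := by
    have hFlinGlp : u < Flin Glp := hsep.2
    have hint1 : Integrable (fun a => ⇑φ a * ⇑Glp a) μ := by
      have h0 : Integrable (fun x => G x * ψ₀ x) μ :=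
        Integrable.bdd_mul hψ₀int hG_meas.aestronglyMeasurable (Filter.Eventually.of_forall hG_bd)
      apply h0.congr
      filter_upwards [hψ₀ae, MemLp.coeFn_toLp hGmem] with a h1 h2
      rw [hGlp, h2, h1, mul_comm]
    have h1 : Flin Glp ≤ ∫ a, G a * |ψ₀ a| ∂μ := by
      rw [hinner Glp]
      apply integral_mono_ae hint1 hint2
      filter_upwards [hψ₀ae, MemLp.coeFn_toLp hGmem] with a ha hb
      rw [hGlp, hb, ha]
      calc ψ₀ a * G a ≤ |ψ₀ a| * G a :=
            mul_le_mul_of_nonneg_right (le_abs_self _) (hG_nonneg a)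
      _ = G a * |ψ₀ a| := mul_comm _ _
    have hofReal2 : (∫⁻ t, gn t * ψ t ∂μ)
        = ENNReal.ofReal (∫ a, G a * |ψ₀ a| ∂μ) := by
      rw [ofReal_integral_eq_lintegral_ofReal hint2 (Filter.Eventually.of_forall
        (fun a => mul_nonneg (hG_nonneg a) (abs_nonneg _)))]
      apply lintegral_congr
      intro a
      rw [ENNReal.ofReal_mul (hG_nonneg a)]
      congr 1
      exact (ENNReal.ofReal_toReal (hgn_ne_top a)).symm
    calc ENNReal.ofReal u < ENNReal.ofReal (Flin Glp) :=
          (ENNReal.ofReal_lt_ofReal_iff (lt_trans hu0 hFlinGlp)).2 hFlinGlp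
    _ ≤ ENNReal.ofReal (∫ a, G a * |ψ₀ a| ∂μ) := ENNReal.ofReal_le_ofReal h1
    _ = ∫⁻ t, gn t * ψ t ∂μ := hofReal2.symm
  -- final contradiction
  have hNd : X.Nd ψ ≤ ENNReal.ofReal u / c := by
    refine iSup_le fun h => iSup_le fun hh => iSup_le fun hN1 => ?_
    have hch : X.N (fun t => ((c.toNNReal : ℝ≥0) : ℝ≥0∞) * h t) ≤ c := by
      rw [X.smul_eq _ _ hh, ENNReal.coe_toNNReal hct]
      calc c * X.N h ≤ c * 1 := mul_le_mul_right hN1 c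
      _ = c := mul_one c
    have hA := claimA (fun t => ((c.toNNReal : ℝ≥0) : ℝ≥0∞) * h t) (measurable_const.mul hh) hch
    have e : (∫⁻ t in Set.Ioo (0:ℝ) 1, (((c.toNNReal : ℝ≥0) : ℝ≥0∞) * h t) * ψ t)
        = ((c.toNNReal : ℝ≥0) : ℝ≥0∞) * ∫⁻ t in Set.Ioo (0:ℝ) 1, h t * ψ t := by
      rw [← lintegral_const_mul _ (f := fun t => h t * ψ t) (hh.mul hψm)]
      exact lintegral_congr fun t => mul_assoc _ _ _
    rw [e, ENNReal.coe_toNNReal hct] at hA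
    rw [ENNReal.le_div_iff_mul_le (Or.inl hc0) (Or.inl hct), mul_comm]
    exact hA
  have hc1 : (∫⁻ t, gn t * ψ t ∂μ) ≤ ∫⁻ t, g t * ψ t ∂μ :=
    lintegral_mono fun t => mul_le_mul_left (min_le_left _ _) _
  have hfinal : (∫⁻ t, gn t * ψ t ∂μ) ≤ ENNReal.ofReal u :=
    calc (∫⁻ t, gn t * ψ t ∂μ) ≤ ∫⁻ t, g t * ψ t ∂μ := hc1
    _ ≤ c * X.Nd ψ := hdual ψ hψm
    _ ≤ c * (ENNReal.ofReal u / c) := mul_le_mul_right hNd c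
    _ = ENNReal.ofReal u := ENNReal.mul_div_cancel hc0 hct
  exact absurd (lt_of_lt_of_le hB hfinal) (lt_irrefl _)

end RIFunctionNorm


/-- Boundedness of the operator `T_γ`.
Let `γ < 1` and let `‖·‖_X` be a rearrangement-invariant function norm on `(0,1)`.  For the
operator `(T_γ f)(r) = r^{1−γ} ∫_r^1 s^{γ−2} f(s) ds` one has
`‖T_γ f‖_X ≤ (1/(1−γ)) ‖f‖_X` for every measurable `f : (0,1) → [0,∞]`. -/
theorem statement3 (γ : ℝ) (hγ : γ < 1) (X : RIFunctionNorm)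
    (f : ℝ → ℝ≥0∞) (hf : Measurable f) :
    X.N (fun r => ENNReal.ofReal (r ^ (1 - γ)) *
        ∫⁻ s in Set.Ioo r (1 : ℝ), ENNReal.ofReal (s ^ (γ - 2)) * f s) ≤
      ENNReal.ofReal (1 / (1 - γ)) * X.N f := by
  have hTmeas : Measurable (S3.Tfun γ f) := S3.Tfun_measurable γ f
  show X.N (S3.Tfun γ f) ≤ ENNReal.ofReal (1 / (1 - γ)) * X.N f
  have h1γ : (0:ℝ) < 1 / (1 - γ) := div_pos one_pos (by linarith)
  rcases eq_or_ne (X.N f) 0 with hNf0 | hNf0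
  · -- trivial case : f vanishes a.e. on (0,1)
    have hae : ∀ᵐ t ∂(volume.restrict (Set.Ioo (0:ℝ) 1)), f t = 0 := by
      by_contra hc
      exact absurd (X.pos f hf hc) (by simp [hNf0])
    have hT0 : ∀ᵐ r ∂(volume.restrict (Set.Ioo (0:ℝ) 1)), S3.Tfun γ f r = 0 := by
      rw [ae_restrict_iff' measurableSet_Ioo]
      refine Filter.Eventually.of_forall (fun r hr => ?_)
      have hsub : Set.Ioo r 1 ⊆ Set.Ioo 0 1 := Set.Ioo_subset_Ioo hr.1.le le_rfl
      have hae2 : ∀ᵐ s ∂(volume.restrict (Set.Ioo r (1:ℝ))), f s = 0 :=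
        ae_restrict_of_ae_restrict_of_subset hsub hae
      have hz : (∫⁻ s in Set.Ioo r (1:ℝ), ENNReal.ofReal (s ^ (γ-2)) * f s) = 0 := by
        have : (∫⁻ s in Set.Ioo r (1:ℝ), ENNReal.ofReal (s ^ (γ-2)) * f s)
            = ∫⁻ _ in Set.Ioo r (1:ℝ), 0 := by
          apply lintegral_congr_ae
          filter_upwards [hae2] with s hs
          simp [hs]
        rw [this, lintegral_zero]
      rw [S3.Tfun, hz, mul_zero]
    have : X.N (S3.Tfun γ f) = X.N (fun _ => 0) :=
      X.N_congr_ae hTmeas measurable_const hT0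
    rw [this, X.N_zero]
    exact zero_le
  · rcases eq_or_ne (X.N f) ⊤ with hNft | hNft
    · rw [hNft, ENNReal.mul_top (ENNReal.ofReal_pos.2 h1γ).ne']
      exact le_top
    · apply X.N_le_of_dual_bound hTmeas
        (mul_ne_zero (ENNReal.ofReal_pos.2 h1γ).ne' hNf0)
        (ENNReal.mul_ne_top ENNReal.ofReal_ne_top hNft)
      intro ψ hψ
      exact S3.dual_bound X hγ hf hψ hNf0 hNft
end

section
/- Let n ∈ ℕ with n ≥ 2, m ∈ ℕ, and let f : (0,1) → [0,∞) be measurable. Define v_f : ℝ^n → [0,∞] by v_f(x) = ∫_{ω_n |x|^n}^{1} s^{−m + m/n} f(s) (s − ω_n |x|^n)^{m−1} ds, where ω_n is the Lebesgue measure of the unit ball in ℝ^n (the integral being 0 when ω_n|x|^n ≥ 1). For r ∈ (0,1) let B(r) denote the open ball in ℝ^n centered at the origin with Lebesgue measure r. Then for every r ∈ (0,1), (1/r) ∫_{B(r)} v_f(x) dx ≥ 2^{−m} ∫_r^1 s^{−1 + m/n} f(s) ds. -/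
open MeasureTheory ENNReal NNReal Set

/-- The Lebesgue measure `ω_n` of the unit ball in `ℝ^n`. -/
noncomputable def omegaN (n : ℕ) : ℝ :=
  (volume (Metric.ball (0 : EuclideanSpace ℝ (Fin n)) 1)).toReal

/-- The radially decreasing function
`v_f(x) = ∫_{ω_n|x|^n}^1 s^{−m+m/n} f(s) (s − ω_n|x|^n)^{m−1} ds`
(the integral being `0` when `ω_n|x|^n ≥ 1`). -/
noncomputable def vF (n m : ℕ) (f : ℝ → ℝ) (x : EuclideanSpace ℝ (Fin n)) : ℝ≥0∞ :=
  ∫⁻ s in Set.Ioo (omegaN n * ‖x‖ ^ n) 1,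
    ENNReal.ofReal (s ^ (-(m : ℝ) + (m : ℝ) / n) * f s * (s - omegaN n * ‖x‖ ^ n) ^ (m - 1))

/-- The open ball in `ℝ^n` centered at the origin with Lebesgue measure `r`. -/
noncomputable def ballOfMeasure (n : ℕ) (r : ℝ) : Set (EuclideanSpace ℝ (Fin n)) :=
  Metric.ball 0 ((r / omegaN n) ^ (1 / (n : ℝ)))

/-- A lower bound for averages of `v_f` over balls centered at the origin.
Let `n ≥ 2`, `m ∈ ℕ`, and let `f : (0,1) → [0,∞)` be measurable.  Then for every `r ∈ (0,1)`,
`(1/r) ∫_{B(r)} v_f dx ≥ 2^{−m} ∫_r^1 s^{−1+m/n} f(s) ds`, where `B(r)` is the ball centered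
at the origin with measure `r`. -/
theorem statement11 (n m : ℕ) (hn : 2 ≤ n) (hm : 1 ≤ m)
    (f : ℝ → ℝ) (hf : Measurable f) (hfpos : ∀ s, 0 ≤ f s) :
    ∀ r : ℝ, r ∈ Set.Ioo (0 : ℝ) 1 →
      ((2 : ℝ≥0∞) ^ m)⁻¹ *
          ∫⁻ s in Set.Ioo r (1 : ℝ), ENNReal.ofReal (s ^ (-1 + (m : ℝ) / n) * f s) ≤
        (ENNReal.ofReal r)⁻¹ * ∫⁻ x in ballOfMeasure n r, vF n m f x := by
  intro r hr
  obtain ⟨hr0, hr1⟩ := hr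
  have hn0 : (n : ℝ) ≠ 0 := Nat.cast_ne_zero.mpr (by omega)
  have hball_fin : volume (Metric.ball (0 : EuclideanSpace ℝ (Fin n)) 1) ≠ ⊤ :=
    measure_ball_lt_top.ne
  haveI : Nonempty (Fin n) := ⟨⟨0, by omega⟩⟩
  have hball_pos : 0 < volume (Metric.ball (0 : EuclideanSpace ℝ (Fin n)) 1) :=
    Metric.measure_ball_pos _ _ one_pos
  have hω : 0 < omegaN n := ENNReal.toReal_pos hball_pos.ne' hball_fin
  set ω := omegaN n with hωdef
  have hωvol : volume (Metric.ball (0 : EuclideanSpace ℝ (Fin n)) 1) = ENNReal.ofReal ω :=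
    (ENNReal.ofReal_toReal hball_fin).symm
  -- volume of `ballOfMeasure n t` equals `ofReal t` for `0 < t`
  have hvol : ∀ t : ℝ, 0 < t → volume (ballOfMeasure n t) = ENNReal.ofReal t := by
    intro t ht
    have hrad : (0 : ℝ) ≤ (t / ω) ^ (1 / (n : ℝ)) :=
      Real.rpow_nonneg (div_nonneg ht.le hω.le) _
    rw [ballOfMeasure, Measure.addHaar_ball _ _ hrad, finrank_euclideanSpace_fin,
      one_div, Real.rpow_inv_natCast_pow (div_nonneg ht.le hω.le) (by omega),
      hωvol, ← ENNReal.ofReal_mul (div_nonneg ht.le hω.le),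
      div_mul_cancel₀ _ hω.ne']
  -- the half-measure ball is inside the ball of measure r
  have hsub : ballOfMeasure n (r / 2) ⊆ ballOfMeasure n r := by
    apply Metric.ball_subset_ball
    apply Real.rpow_le_rpow (div_nonneg (by linarith) hω.le)
    · gcongr
      linarith
    · positivity
  -- points of the small ball satisfy ω‖x‖ⁿ < r/2
  have hsmall : ∀ x ∈ ballOfMeasure n (r / 2), ω * ‖x‖ ^ n < r / 2 := by
    intro x hx
    have hx' : ‖x‖ < (r / 2 / ω) ^ (1 / (n : ℝ)) := by
      simpa [ballOfMeasure, dist_eq_norm] using hx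
    have h1 : ‖x‖ ^ n < ((r / 2 / ω) ^ (1 / (n : ℝ))) ^ n :=
      pow_lt_pow_left₀ hx' (norm_nonneg _) (by omega)
    rw [one_div, Real.rpow_inv_natCast_pow (div_nonneg (by linarith) hω.le) (by omega)] at h1
    calc ω * ‖x‖ ^ n < ω * (r / 2 / ω) := by
          exact mul_lt_mul_of_pos_left h1 hω
      _ = r / 2 := by field_simp
  -- the constant lower bound for vF on the small ball
  set C : ℝ≥0∞ := ∫⁻ s in Set.Ioo r (1 : ℝ),
      ENNReal.ofReal (s ^ (-(m : ℝ) + (m : ℝ) / n) * f s * (s / 2) ^ (m - 1)) with hC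
  have hvFlow : ∀ x ∈ ballOfMeasure n (r / 2), C ≤ vF n m f x := by
    intro x hx
    have ht : ω * ‖x‖ ^ n < r / 2 := hsmall x hx
    have ht0 : 0 ≤ ω * ‖x‖ ^ n := by positivity
    calc C ≤ ∫⁻ s in Set.Ioo r (1 : ℝ),
          ENNReal.ofReal (s ^ (-(m : ℝ) + (m : ℝ) / n) * f s *
            (s - ω * ‖x‖ ^ n) ^ (m - 1)) := by
          apply setLIntegral_mono' measurableSet_Ioo
          intro s hs
          apply ENNReal.ofReal_le_ofReal
          apply mul_le_mul_of_nonneg_left _ (by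
            have h0 : 0 ≤ s := le_trans hr0.le hs.1.le
            have := hfpos s
            positivity)
          apply pow_le_pow_left₀ (by nlinarith [hs.1, hr0])
          nlinarith [hs.1]
      _ ≤ vF n m f x := by
          apply lintegral_mono_set
          apply Set.Ioo_subset_Ioo (by linarith) le_rfl
  -- lower bound for the integral over the big ball
  have hmain : ENNReal.ofReal (r / 2) * C ≤ ∫⁻ x in ballOfMeasure n r, vF n m f x := by
    calc ENNReal.ofReal (r / 2) * C
        = C * volume (ballOfMeasure n (r / 2)) := by
          rw [hvol _ (by linarith), mul_comm]
      _ = ∫⁻ _ in ballOfMeasure n (r / 2), C := (setLIntegral_const _ _).symm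
      _ ≤ ∫⁻ x in ballOfMeasure n (r / 2), vF n m f x :=
          setLIntegral_mono' measurableSet_ball hvFlow
      _ ≤ ∫⁻ x in ballOfMeasure n r, vF n m f x := lintegral_mono_set hsub
  -- relate C with the integral on the left-hand side
  have hCrel : (∫⁻ s in Set.Ioo r (1 : ℝ), ENNReal.ofReal (s ^ (-1 + (m : ℝ) / n) * f s))
      = 2 ^ (m - 1) * C := by
    rw [hC, ← lintegral_const_mul' _ _ (by simp : ((2 : ℝ≥0∞) ^ (m - 1)) ≠ ⊤)]
    apply setLIntegral_congr_fun measurableSet_Ioo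
    intro s hs
    have hs0 : 0 < s := lt_trans hr0 hs.1
    have key : s ^ (-1 + (m : ℝ) / n) * f s
        = 2 ^ (m - 1) * (s ^ (-(m : ℝ) + (m : ℝ) / n) * f s * (s / 2) ^ (m - 1)) := by
      have h1 : (s / 2) ^ (m - 1) = s ^ (m - 1) / 2 ^ (m - 1) := div_pow s 2 (m - 1)
      have h2 : s ^ ((m : ℕ) - 1) = s ^ (((m - 1 : ℕ) : ℝ)) := (Real.rpow_natCast s (m - 1)).symm
      have h3 : s ^ (-(m : ℝ) + (m : ℝ) / n) * s ^ (((m - 1 : ℕ) : ℝ))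
          = s ^ (-1 + (m : ℝ) / n) := by
        rw [← Real.rpow_add hs0]
        congr 1
        have : ((m - 1 : ℕ) : ℝ) = (m : ℝ) - 1 := by
          rw [Nat.cast_sub hm]; simp
        rw [this]; ring
      have e1 : s ^ (-(m : ℝ) + (m : ℝ) / n) * s ^ ((m : ℕ) - 1) = s ^ (-1 + (m : ℝ) / n) := by
        rw [h2, ← Real.rpow_add hs0]
        congr 1
        rw [Nat.cast_sub hm]
        push_cast
        ring
      have h2pow : (0 : ℝ) < 2 ^ (m - 1) := by positivity
      rw [h1, ← e1]
      field_simp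
    beta_reduce
    rw [key, ENNReal.ofReal_mul (by positivity)]
    congr 1
    rw [ENNReal.ofReal_pow (by norm_num)]
    norm_num
  -- put everything together
  rw [hCrel]
  have h2m : ((2 : ℝ≥0∞) ^ m)⁻¹ * (2 ^ (m - 1) * C) = 2⁻¹ * C := by
    have hms : m = (m - 1) + 1 := by omega
    rw [hms, pow_succ]
    rw [ENNReal.mul_inv (by simp) (by simp)]
    calc ((2:ℝ≥0∞) ^ (m-1))⁻¹ * 2⁻¹ * (2 ^ (m - 1) * C)
        = (((2:ℝ≥0∞) ^ (m-1))⁻¹ * 2 ^ (m - 1)) * (2⁻¹ * C) := by ring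
      _ = 2⁻¹ * C := by
          rw [ENNReal.inv_mul_cancel (by simp) (by simp), one_mul]
  rw [h2m]
  calc (2 : ℝ≥0∞)⁻¹ * C
      = (ENNReal.ofReal r)⁻¹ * (ENNReal.ofReal (r / 2) * C) := by
        rw [← mul_assoc]
        congr 1
        rw [show r / 2 = r * (1/2) by ring, ENNReal.ofReal_mul hr0.le, ← mul_assoc,
          ENNReal.inv_mul_cancel (by simpa using hr0) ENNReal.ofReal_ne_top, one_mul]
        rw [show (1:ℝ)/2 = (2:ℝ)⁻¹ by norm_num, ENNReal.ofReal_inv_of_pos (by norm_num)]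
        norm_num
    _ ≤ (ENNReal.ofReal r)⁻¹ * ∫⁻ x in ballOfMeasure n r, vF n m f x := by
        exact mul_le_mul_right hmain _
end

section
/- Let n, m, h ∈ ℕ. Then there exists a constant c > 0 depending only on n, m and h such that for every measurable f : (0,1) → [0,∞) vanishing a.e. on (1/2, 1) and every r ∈ (0,1/2), (1/r) ∫_0^r ϱ^{h/n} ( ∫_ϱ^1 s^{−m + (m−h)/n} f(s) (s − ϱ)^{m−1} ds ) dϱ ≥ c · r^{h/n} ∫_r^1 s^{−1 + (m−h)/n} f(s) ds. -/
open MeasureTheory ENNReal NNReal Set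

/-- A lower bound for an iterated integral.
Let `n, m, h ∈ ℕ`.  There is a constant `c > 0` depending only on `n`, `m` and `h` such
that for every measurable `f : (0,1) → [0,∞)` vanishing a.e. on `(1/2,1)` and every
`r ∈ (0,1/2)`,
`(1/r) ∫_0^r ϱ^{h/n} (∫_ϱ^1 s^{−m+(m−h)/n} f(s) (s−ϱ)^{m−1} ds) dϱ
  ≥ c r^{h/n} ∫_r^1 s^{−1+(m−h)/n} f(s) ds`. -/
theorem statement12 (n m h : ℕ) (hn : 1 ≤ n) (hm : 1 ≤ m) (hh : 1 ≤ h) :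
    ∃ c : ℝ, 0 < c ∧
      ∀ f : ℝ → ℝ, Measurable f → (∀ s, 0 ≤ f s) →
        (∀ᵐ s ∂(volume.restrict (Set.Ioo (1 / 2 : ℝ) 1)), f s = 0) →
        ∀ r : ℝ, r ∈ Set.Ioo (0 : ℝ) (1 / 2) →
          ENNReal.ofReal c * (ENNReal.ofReal (r ^ ((h : ℝ) / n)) *
              ∫⁻ s in Set.Ioo r (1 : ℝ),
                ENNReal.ofReal (s ^ (-1 + ((m : ℝ) - h) / n) * f s)) ≤
            (ENNReal.ofReal r)⁻¹ *
              ∫⁻ ϱ in Set.Ioo (0 : ℝ) r,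
                ENNReal.ofReal (ϱ ^ ((h : ℝ) / n)) *
                  ∫⁻ s in Set.Ioo ϱ (1 : ℝ),
                    ENNReal.ofReal
                      (s ^ (-(m : ℝ) + ((m : ℝ) - h) / n) * f s * (s - ϱ) ^ (m - 1)) := by
  set A : ℝ := (1/4 : ℝ) ^ (m - 1) with hA
  have hA0 : 0 < A := by positivity
  refine ⟨(1/4) * A * (1/2 : ℝ) ^ h, by positivity, ?_⟩
  intro f hf hf0 _ r hr
  obtain ⟨hr0, hr2⟩ := hr
  set e : ℝ := ((m : ℝ) - h) / n with he
  set I : ℝ≥0∞ := ∫⁻ s in Set.Ioo r (1 : ℝ), ENNReal.ofReal (s ^ (-1 + e) * f s) with hI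
  have hmeasg : Measurable fun s : ℝ => ENNReal.ofReal (s ^ (-1 + e) * f s) := by
    fun_prop
  -- inner bound
  have hinner : ∀ ϱ ∈ Set.Ioo (r/2) (3*r/4),
      ENNReal.ofReal A * I ≤
        ∫⁻ s in Set.Ioo ϱ (1:ℝ),
          ENNReal.ofReal (s ^ (-(m : ℝ) + e) * f s * (s - ϱ) ^ (m - 1)) := by
    intro ϱ hϱ
    have hϱ1 : r/2 < ϱ := hϱ.1
    have hϱ2 : ϱ < 3*r/4 := hϱ.2
    have hsub : Set.Ioo r (1:ℝ) ⊆ Set.Ioo ϱ 1 := fun s hs => ⟨by linarith [hs.1], hs.2⟩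
    calc ENNReal.ofReal A * I
        = ∫⁻ s in Set.Ioo r (1:ℝ), ENNReal.ofReal A * ENNReal.ofReal (s ^ (-1 + e) * f s) :=
          (lintegral_const_mul _ hmeasg).symm
      _ ≤ ∫⁻ s in Set.Ioo r (1:ℝ),
            ENNReal.ofReal (s ^ (-(m : ℝ) + e) * f s * (s - ϱ) ^ (m - 1)) := by
          refine lintegral_mono_ae ?_
          refine Filter.Eventually.mono (ae_restrict_mem measurableSet_Ioo) fun s hs => ?_
          have hs0 : 0 < s := hr0.trans hs.1
          rw [← ENNReal.ofReal_mul hA0.le]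
          refine ENNReal.ofReal_le_ofReal ?_
          have h1 : s/4 ≤ s - ϱ := by nlinarith [hs.1]
          have h2 : (s/4)^(m-1) ≤ (s-ϱ)^(m-1) := pow_le_pow_left₀ (by positivity) h1 _
          have hc : ((m-1 : ℕ) : ℝ) = (m : ℝ) - 1 := by
            push_cast [Nat.cast_sub hm]; ring
          have h3 : s ^ (-(m : ℝ) + e) * (s/4)^(m-1) = A * s ^ (-1 + e) := by
            have hdiv : (s/4 : ℝ)^(m-1) = s^(m-1) * A := by
              rw [hA, div_pow, div_pow]; ring
            rw [hdiv, ← Real.rpow_natCast s (m-1), hc, ← mul_assoc,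
              ← Real.rpow_add hs0]
            ring_nf
          have key : A * s ^ (-1 + e) ≤ s ^ (-(m : ℝ) + e) * (s - ϱ)^(m-1) := by
            rw [← h3]
            exact mul_le_mul_of_nonneg_left h2 (Real.rpow_nonneg hs0.le _)
          calc A * (s ^ (-1 + e) * f s) = (A * s ^ (-1 + e)) * f s := by ring
            _ ≤ (s ^ (-(m : ℝ) + e) * (s - ϱ)^(m-1)) * f s :=
              mul_le_mul_of_nonneg_right key (hf0 s)
            _ = s ^ (-(m : ℝ) + e) * f s * (s - ϱ)^(m-1) := by ring
      _ ≤ _ := lintegral_mono_set hsub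
  -- outer bound
  have hsubO : Set.Ioo (r/2) (3*r/4) ⊆ Set.Ioo (0:ℝ) r := fun ϱ hϱ =>
    ⟨by linarith [hϱ.1], by linarith [hϱ.2]⟩
  have houter : ENNReal.ofReal (r/4) *
      (ENNReal.ofReal ((r/2) ^ ((h : ℝ) / n)) * (ENNReal.ofReal A * I)) ≤
      ∫⁻ ϱ in Set.Ioo (0:ℝ) r, ENNReal.ofReal (ϱ ^ ((h : ℝ) / n)) *
        ∫⁻ s in Set.Ioo ϱ (1:ℝ),
          ENNReal.ofReal (s ^ (-(m : ℝ) + e) * f s * (s - ϱ) ^ (m - 1)) := by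
    calc ENNReal.ofReal (r/4) *
        (ENNReal.ofReal ((r/2) ^ ((h : ℝ) / n)) * (ENNReal.ofReal A * I))
        = (∫⁻ _ in Set.Ioo (r/2) (3*r/4),
            (ENNReal.ofReal ((r/2) ^ ((h : ℝ) / n)) * (ENNReal.ofReal A * I))) := by
          rw [setLIntegral_const, Real.volume_Ioo, mul_comm]
          ring_nf
      _ ≤ ∫⁻ ϱ in Set.Ioo (r/2) (3*r/4), ENNReal.ofReal (ϱ ^ ((h : ℝ) / n)) *
            ∫⁻ s in Set.Ioo ϱ (1:ℝ),
              ENNReal.ofReal (s ^ (-(m : ℝ) + e) * f s * (s - ϱ) ^ (m - 1)) := by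
          refine lintegral_mono_ae ?_
          refine Filter.Eventually.mono (ae_restrict_mem measurableSet_Ioo) fun ϱ hϱ => ?_
          refine mul_le_mul' (ENNReal.ofReal_le_ofReal ?_) (hinner ϱ hϱ)
          exact Real.rpow_le_rpow (by positivity) hϱ.1.le (by positivity)
      _ ≤ _ := lintegral_mono_set hsubO
  -- put together
  have hrne : ENNReal.ofReal r ≠ 0 := by simp [hr0, ENNReal.ofReal_eq_zero, not_le]
  refine le_trans ?_ (mul_le_mul_right houter _)
  have hsplit : ENNReal.ofReal (r/4) = ENNReal.ofReal r * ENNReal.ofReal (1/4) := by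
    rw [← ENNReal.ofReal_mul hr0.le]; congr 1; ring
  rw [hsplit, mul_assoc (ENNReal.ofReal r), ← mul_assoc ((ENNReal.ofReal r)⁻¹),
    ENNReal.inv_mul_cancel hrne ENNReal.ofReal_ne_top, one_mul]
  have hreal : (1/4 * A * (1/2:ℝ)^h) * r ^ ((h : ℝ) / n) ≤
      (1/4) * ((r/2) ^ ((h : ℝ) / n) * A) := by
    have hhalf : (1/2 : ℝ) ^ h ≤ (1/2 : ℝ) ^ ((h : ℝ) / n) := by
      rw [← Real.rpow_natCast (1/2 : ℝ) h]
      refine Real.rpow_le_rpow_of_exponent_ge (by norm_num) (by norm_num) ?_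
      exact div_le_self (Nat.cast_nonneg h) (by exact_mod_cast hn)
    have hmul : (r/2 : ℝ) ^ ((h : ℝ) / n) = r ^ ((h : ℝ) / n) * (1/2 : ℝ) ^ ((h : ℝ) / n) := by
      rw [show (r/2 : ℝ) = r * (1/2) by ring, Real.mul_rpow hr0.le (by norm_num)]
    rw [hmul]
    have hrp : (0:ℝ) ≤ r ^ ((h : ℝ) / n) := Real.rpow_nonneg hr0.le _
    nlinarith [mul_le_mul_of_nonneg_right hhalf hrp, hA0.le]
  have final : ENNReal.ofReal (1/4 * A * (1/2:ℝ)^h) * ENNReal.ofReal (r ^ ((h : ℝ) / n)) ≤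
      ENNReal.ofReal (1/4) * (ENNReal.ofReal ((r/2) ^ ((h : ℝ) / n)) * ENNReal.ofReal A) := by
    rw [← ENNReal.ofReal_mul (by positivity), ← ENNReal.ofReal_mul (by positivity),
      ← ENNReal.ofReal_mul (by positivity)]
    exact ENNReal.ofReal_le_ofReal hreal
  calc ENNReal.ofReal (1/4 * A * (1/2:ℝ)^h) * (ENNReal.ofReal (r ^ ((h : ℝ) / n)) * I)
      = (ENNReal.ofReal (1/4 * A * (1/2:ℝ)^h) * ENNReal.ofReal (r ^ ((h : ℝ) / n))) * I := by
        ring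
    _ ≤ (ENNReal.ofReal (1/4) * (ENNReal.ofReal ((r/2) ^ ((h : ℝ) / n)) * ENNReal.ofReal A)) * I :=
        mul_le_mul_left final I
    _ = ENNReal.ofReal (1/4) * (ENNReal.ofReal ((r/2) ^ ((h : ℝ) / n)) * (ENNReal.ofReal A * I)) := by
        ring
end

section
/- Let ‖·‖_X be a rearrangement-invariant function norm on (0,1), with associate norm ‖g‖_{X'} = sup{ ∫_0^1 f(s) g(s) ds : f : (0,1) → [0,∞] measurable, ‖f‖_X ≤ 1 }. Let n ∈ ℕ with n ≥ 2 and let m ∈ ℕ with 1 ≤ m ≤ n−1. Then there exist constants c₁, c₂ > 0 depending only on m and n such that for every r ∈ (0,1/4), c₁ · sup{ ∫_r^1 s^{−1+m/n} f^{**}(s) ds : ‖f‖_X ≤ 1 } ≤ ‖ s ↦ s^{−1+m/n} χ_{(r,1)}(s) ‖_{X'} ≤ c₂ · sup{ ∫_r^1 s^{−1+m/n} f^{**}(s) ds : ‖f‖_X ≤ 1 }, where the suprema are over measurable f : (0,1) → [0,∞] with ‖f‖_X ≤ 1. -/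
open MeasureTheory ENNReal NNReal Set

/-- `f^{**}(t) = (1/t) ∫_0^t f^*(s) ds` for `t > 0`. -/
noncomputable def nnrearr2 (f : ℝ → ℝ≥0∞) (t : ℝ) : ℝ≥0∞ :=
  (ENNReal.ofReal t)⁻¹ * ∫⁻ s in Set.Ioo (0 : ℝ) t, nnrearr f s

/-- The associate norm of a rearrangement-invariant function norm:
`‖g‖_{X'} = sup { ∫_0^1 f g : f measurable, ‖f‖_X ≤ 1 }`. -/
noncomputable def assocNorm (X : RIFunctionNorm) (g : ℝ → ℝ≥0∞) : ℝ≥0∞ :=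
  ⨆ f ∈ {f : ℝ → ℝ≥0∞ | Measurable f ∧ X.N f ≤ 1},
    ∫⁻ s in Set.Ioo (0 : ℝ) 1, f s * g s

-- Auxiliary lemmas --

noncomputable def s15D (f : ℝ → ℝ≥0∞) (s : ℝ≥0∞) : ℝ≥0∞ :=
  volume {r : ℝ | r ∈ Set.Ioo (0 : ℝ) 1 ∧ s < f r}

lemma s15D_le_one (f : ℝ → ℝ≥0∞) (s : ℝ≥0∞) : s15D f s ≤ 1 := by
  have h : {r : ℝ | r ∈ Set.Ioo (0 : ℝ) 1 ∧ s < f r} ⊆ Set.Ioo (0 : ℝ) 1 :=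
    fun r hr => hr.1
  calc s15D f s ≤ volume (Set.Ioo (0 : ℝ) 1) := measure_mono h
  _ = 1 := by simp

lemma s15D_antitone (f : ℝ → ℝ≥0∞) : Antitone (s15D f) := by
  intro s s' h
  exact measure_mono (fun r hr => ⟨hr.1, lt_of_le_of_lt h hr.2⟩)

lemma s15D_top (f : ℝ → ℝ≥0∞) : s15D f ⊤ = 0 := by
  have : {r : ℝ | r ∈ Set.Ioo (0 : ℝ) 1 ∧ ⊤ < f r} = ∅ := by
    ext r; simp [not_top_lt]
  simp [s15D, this]

lemma s15_nnrearr_antitone (f : ℝ → ℝ≥0∞) : Antitone (nnrearr f) := by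
  intro t t' h
  apply sInf_le_sInf
  intro s hs
  exact le_trans hs (ENNReal.ofReal_le_ofReal h)

lemma s15_measurable_nnrearr (f : ℝ → ℝ≥0∞) : Measurable (nnrearr f) :=
  (s15_nnrearr_antitone f).measurable

lemma s15D_right_cont (f : ℝ → ℝ≥0∞) (hf : Measurable f) (s : ℝ≥0∞) :
    s15D f s = ⨆ n : ℕ, s15D f (s + (n : ℝ≥0∞)⁻¹) := by
  have hset : {r : ℝ | r ∈ Set.Ioo (0 : ℝ) 1 ∧ s < f r}
      = ⋃ n : ℕ, {r : ℝ | r ∈ Set.Ioo (0 : ℝ) 1 ∧ s + (n : ℝ≥0∞)⁻¹ < f r} := by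
    ext r
    simp only [Set.mem_setOf_eq, Set.mem_iUnion]
    constructor
    · rintro ⟨hr, hlt⟩
      rcases eq_top_or_lt_top s with hs | hs
      · exact absurd (hs ▸ hlt) not_top_lt
      obtain ⟨n, hn⟩ := ENNReal.exists_inv_nat_lt (a := f r - s) (by
        simp only [ne_eq, tsub_eq_zero_iff_le, not_le]; exact hlt)
      refine ⟨n, ⟨hr, ?_⟩⟩
      calc s + (n : ℝ≥0∞)⁻¹ < s + (f r - s) := by
            exact ENNReal.add_lt_add_left hs.ne hn
      _ = f r := add_tsub_cancel_of_le hlt.le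
    · rintro ⟨n, hr, hlt⟩
      exact ⟨hr, lt_of_le_of_lt le_self_add hlt⟩
  have hmono : Monotone (fun n : ℕ =>
      {r : ℝ | r ∈ Set.Ioo (0 : ℝ) 1 ∧ s + (n : ℝ≥0∞)⁻¹ < f r}) := by
    intro n m hnm r hr
    refine ⟨hr.1, lt_of_le_of_lt ?_ hr.2⟩
    exact add_le_add le_rfl (ENNReal.inv_le_inv.2 (by exact_mod_cast hnm))
  have hmeas : ∀ n : ℕ, MeasurableSet
      {r : ℝ | r ∈ Set.Ioo (0 : ℝ) 1 ∧ s + (n : ℝ≥0∞)⁻¹ < f r} := by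
    intro n
    exact measurableSet_Ioo.inter (hf measurableSet_Ioi)
  calc s15D f s = volume (⋃ n : ℕ, {r : ℝ | r ∈ Set.Ioo (0 : ℝ) 1 ∧ s + (n : ℝ≥0∞)⁻¹ < f r}) := by
        rw [s15D, hset]
  _ = ⨆ n : ℕ, s15D f (s + (n : ℝ≥0∞)⁻¹) :=
      hmono.directed_le.measure_iUnion

lemma s15_lt_nnrearr_iff (f : ℝ → ℝ≥0∞) (hf : Measurable f) {s : ℝ≥0∞} (hs : s ≠ ⊤) (t : ℝ) :
    s < nnrearr f t ↔ ENNReal.ofReal t < s15D f s := by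
  constructor
  · intro h
    by_contra hc
    push_neg at hc
    exact absurd (sInf_le (by exact hc : s ∈ {s : ℝ≥0∞ | s15D f s ≤ ENNReal.ofReal t}))
      (not_le.2 h)
  · intro h
    rw [s15D_right_cont f hf s] at h
    obtain ⟨n, hn⟩ := lt_iSup_iff.1 h
    have hpos : (0 : ℝ≥0∞) < (n : ℝ≥0∞)⁻¹ := by
      simp [ENNReal.inv_pos, ne_eq, ENNReal.natCast_ne_top]
    have hlt : s < s + (n : ℝ≥0∞)⁻¹ := ENNReal.lt_add_right hs hpos.ne'
    refine lt_of_lt_of_le hlt (le_sInf ?_)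
    intro x hx
    by_contra hcx
    push_neg at hcx
    have := s15D_antitone f hcx.le
    exact absurd (le_trans this hx) (not_le.2 hn)

lemma s15_prefix_measure (f : ℝ → ℝ≥0∞) (hf : Measurable f) {s : ℝ≥0∞} (hs : s ≠ ⊤)
    {u : ℝ} (hu : 0 < u) (hu1 : u ≤ 1) :
    volume {t : ℝ | t ∈ Set.Ioo 0 u ∧ s < nnrearr f t} = min (s15D f s) (ENNReal.ofReal u) := by
  have hDne : s15D f s ≠ ⊤ := (lt_of_le_of_lt (s15D_le_one f s) one_lt_top).ne
  have hset : {t : ℝ | t ∈ Set.Ioo 0 u ∧ s < nnrearr f t}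
      = Set.Ioo 0 (min u (s15D f s).toReal) := by
    ext t
    simp only [Set.mem_setOf_eq, Set.mem_Ioo, lt_min_iff]
    constructor
    · rintro ⟨⟨ht0, htu⟩, hlt⟩
      have := (s15_lt_nnrearr_iff f hf hs t).1 hlt
      exact ⟨ht0, htu, (ENNReal.ofReal_lt_iff_lt_toReal ht0.le hDne).1 this⟩
    · rintro ⟨ht0, htu, htd⟩
      refine ⟨⟨ht0, htu⟩, (s15_lt_nnrearr_iff f hf hs t).2 ?_⟩
      exact (ENNReal.ofReal_lt_iff_lt_toReal ht0.le hDne).2 htd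
  rw [hset, Real.volume_Ioo, sub_zero]
  rcases le_total u (s15D f s).toReal with h | h
  · rw [min_eq_left h, min_eq_right]
    rw [← ENNReal.ofReal_toReal hDne]
    exact ENNReal.ofReal_le_ofReal h
  · rw [min_eq_right h, min_eq_left, ENNReal.ofReal_toReal hDne]
    rw [← ENNReal.ofReal_toReal hDne]
    exact ENNReal.ofReal_le_ofReal h

lemma s15D_nnrearr (f : ℝ → ℝ≥0∞) (hf : Measurable f) (s : ℝ≥0∞) :
    s15D (nnrearr f) s = s15D f s := by
  rcases eq_or_ne s ⊤ with rfl | hs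
  · rw [s15D_top, s15D_top]
  · rw [s15D, s15_prefix_measure f hf hs one_pos le_rfl]
    simp only [ENNReal.ofReal_one]
    exact min_eq_left (s15D_le_one f s)

lemma s15_nnrearr_nnrearr (f : ℝ → ℝ≥0∞) (hf : Measurable f) :
    nnrearr (nnrearr f) = nnrearr f := by
  funext t
  show sInf _ = sInf _
  congr 1
  ext s
  show s15D (nnrearr f) s ≤ _ ↔ s15D f s ≤ _
  rw [s15D_nnrearr f hf]

lemma s15_layercake (g : ℝ → ℝ≥0∞) (hg : Measurable g) {E : Set ℝ} (hE : MeasurableSet E) :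
    ∫⁻ t in E, g t = ∫⁻ s in Set.Ioi (0:ℝ), volume {t : ℝ | t ∈ E ∧ ENNReal.ofReal s < g t} := by
  have point : ∀ x : ℝ≥0∞,
      x = ∫⁻ s in Set.Ioi (0:ℝ), (if ENNReal.ofReal s < x then (1:ℝ≥0∞) else 0) := by
    intro x
    rcases eq_or_ne x ⊤ with rfl | hx
    · have : ∀ s ∈ Set.Ioi (0:ℝ), (if ENNReal.ofReal s < (⊤:ℝ≥0∞) then (1:ℝ≥0∞) else 0) = 1 := by
        intro s _; simp [ENNReal.ofReal_lt_top]
      rw [setLIntegral_congr_fun measurableSet_Ioi this]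
      simp
    · have hco : ∀ s ∈ Set.Ioi (0:ℝ), (if ENNReal.ofReal s < x then (1:ℝ≥0∞) else 0)
          = (Set.Ioo (0:ℝ) x.toReal).indicator (fun _ => (1:ℝ≥0∞)) s := by
        intro s hs
        by_cases h : ENNReal.ofReal s < x
        · rw [if_pos h, Set.indicator_of_mem]
          exact ⟨hs, (ENNReal.ofReal_lt_iff_lt_toReal (le_of_lt hs) hx).1 h⟩
        · rw [if_neg h, Set.indicator_of_notMem]
          intro hmem
          exact h ((ENNReal.ofReal_lt_iff_lt_toReal (le_of_lt hs) hx).2 hmem.2)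
      rw [setLIntegral_congr_fun measurableSet_Ioi hco]
      rw [lintegral_indicator measurableSet_Ioo]
      rw [Measure.restrict_restrict measurableSet_Ioo]
      have : Set.Ioo (0:ℝ) x.toReal ∩ Set.Ioi (0:ℝ) = Set.Ioo (0:ℝ) x.toReal := by
        apply Set.inter_eq_left.2; intro y hy; exact hy.1
      rw [this]
      simp [Real.volume_Ioo, ENNReal.ofReal_toReal hx]
  have hmeasP : Measurable (fun p : ℝ × ℝ => (if ENNReal.ofReal p.2 < g p.1 then (1:ℝ≥0∞) else 0)) := by
    have : MeasurableSet {p : ℝ × ℝ | ENNReal.ofReal p.2 < g p.1} :=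
      measurableSet_lt (ENNReal.measurable_ofReal.comp measurable_snd) (hg.comp measurable_fst)
    exact Measurable.ite this measurable_const measurable_const
  calc ∫⁻ t in E, g t
      = ∫⁻ t in E, ∫⁻ s in Set.Ioi (0:ℝ), (if ENNReal.ofReal s < g t then (1:ℝ≥0∞) else 0) := by
        exact lintegral_congr fun t => point (g t)
  _ = ∫⁻ s in Set.Ioi (0:ℝ), ∫⁻ t in E, (if ENNReal.ofReal s < g t then (1:ℝ≥0∞) else 0) := by
        exact lintegral_lintegral_swap hmeasP.aemeasurable
  _ = ∫⁻ s in Set.Ioi (0:ℝ), volume {t : ℝ | t ∈ E ∧ ENNReal.ofReal s < g t} := by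
        apply lintegral_congr
        intro s
        have : ∀ t, (if ENNReal.ofReal s < g t then (1:ℝ≥0∞) else 0)
            = ({t : ℝ | ENNReal.ofReal s < g t}).indicator (fun _ => 1) t := by
          intro t
          by_cases h : ENNReal.ofReal s < g t
          · simp [Set.indicator, h]
          · simp [Set.indicator, h]
        rw [lintegral_congr this]
        rw [lintegral_indicator (show MeasurableSet {t : ℝ | ENNReal.ofReal s < g t} from hg measurableSet_Ioi)]
        rw [Measure.restrict_restrict (show MeasurableSet {t : ℝ | ENNReal.ofReal s < g t} from hg measurableSet_Ioi)]
        rw [setLIntegral_one]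
        congr 1
        ext t
        simp only [Set.mem_inter_iff, Set.mem_setOf_eq]
        tauto

lemma s15_nnrearr_congr (f g : ℝ → ℝ≥0∞) (h : ∀ s, s15D f s = s15D g s) :
    nnrearr f = nnrearr g := by
  funext t
  show sInf _ = sInf _
  congr 1
  ext s
  show s15D f s ≤ _ ↔ s15D g s ≤ _
  rw [h s]

lemma s15_claimL (f : ℝ → ℝ≥0∞) (hf : Measurable f) {u : ℝ} (hu : 0 < u) (hu1 : u ≤ 1) :
    ∫⁻ t in Set.Ioo (0:ℝ) u, f t ≤ ∫⁻ t in Set.Ioo (0:ℝ) u, nnrearr f t := by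
  rw [s15_layercake f hf measurableSet_Ioo,
    s15_layercake (nnrearr f) (s15_measurable_nnrearr f) measurableSet_Ioo]
  apply lintegral_mono
  intro s
  dsimp only
  rw [s15_prefix_measure f hf ENNReal.ofReal_ne_top hu hu1]
  apply le_min
  · apply measure_mono
    intro t ht
    exact ⟨⟨ht.1.1, lt_of_lt_of_le ht.1.2 hu1⟩, ht.2⟩
  · calc volume {t : ℝ | t ∈ Set.Ioo 0 u ∧ ENNReal.ofReal s < f t}
        ≤ volume (Set.Ioo (0:ℝ) u) := measure_mono fun t ht => ht.1
    _ = ENNReal.ofReal u := by rw [Real.volume_Ioo, sub_zero]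

lemma s15_Ifun_mono (f : ℝ → ℝ≥0∞) : Monotone (fun u : ℝ => ∫⁻ s in Set.Ioo (0:ℝ) u, nnrearr f s) := by
  intro u v huv
  exact lintegral_mono_set (Set.Ioo_subset_Ioo le_rfl huv)

lemma s15_measurable_nnrearr2 (f : ℝ → ℝ≥0∞) : Measurable (nnrearr2 f) := by
  apply Measurable.mul
  · exact (ENNReal.measurable_ofReal.comp measurable_id).inv
  · exact (s15_Ifun_mono f).measurable

lemma s15_int_eq_nnrearr2 (f : ℝ → ℝ≥0∞) {u : ℝ} (hu : 0 < u) :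
    ∫⁻ s in Set.Ioo (0:ℝ) u, nnrearr f s = ENNReal.ofReal u * nnrearr2 f u := by
  rw [nnrearr2, ← mul_assoc, ENNReal.mul_inv_cancel (by simp [hu]) ENNReal.ofReal_ne_top, one_mul]

lemma s15_nnrearr2_antitone (f : ℝ → ℝ≥0∞) {u v : ℝ} (hu : 0 < u) (huv : u ≤ v) :
    nnrearr2 f v ≤ nnrearr2 f u := by
  rcases eq_or_lt_of_le huv with rfl | hlt
  · exact le_rfl
  have hv : 0 < v := lt_trans hu hlt
  set I := ∫⁻ s in Set.Ioo (0:ℝ) u, nnrearr f s with hI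
  set J := ∫⁻ s in Set.Ioo (0:ℝ) v, nnrearr f s with hJ
  -- fstar u ≤ (ofReal u)⁻¹ * I
  have hfu : ENNReal.ofReal u * nnrearr f u ≤ I := by
    calc ENNReal.ofReal u * nnrearr f u
        = ∫⁻ _ in Set.Ioo (0:ℝ) u, nnrearr f u := by
          rw [setLIntegral_const, Real.volume_Ioo, sub_zero, mul_comm]
    _ ≤ I := setLIntegral_mono (s15_measurable_nnrearr f) fun x hx =>
          s15_nnrearr_antitone f hx.2.le
  have hsplit : J ≤ I + ENNReal.ofReal (v - u) * nnrearr f u := by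
    have : Set.Ioo (0:ℝ) v = Set.Ioo (0:ℝ) u ∪ Set.Ico u v := by
      rw [Set.Ioo_union_Ico_eq_Ioo hu hlt.le]
    rw [hJ, this, lintegral_union measurableSet_Ico]
    · apply add_le_add le_rfl
      calc ∫⁻ s in Set.Ico u v, nnrearr f s
          ≤ ∫⁻ _ in Set.Ico u v, nnrearr f u := by
            exact setLIntegral_mono measurable_const fun x hx => s15_nnrearr_antitone f hx.1
      _ = ENNReal.ofReal (v - u) * nnrearr f u := by
            rw [setLIntegral_const, Real.volume_Ico, mul_comm]
    · exact Set.disjoint_left.2 fun x hx1 hx2 => absurd hx2.1 (not_le.2 hx1.2)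
  -- combine
  have hstep : J ≤ ENNReal.ofReal (v / u) * I := by
    calc J ≤ I + ENNReal.ofReal (v - u) * nnrearr f u := hsplit
    _ ≤ I + ENNReal.ofReal (v - u) * ((ENNReal.ofReal u)⁻¹ * I) := by
        apply add_le_add le_rfl
        refine mul_le_mul_right ?_ _
        calc nnrearr f u = (ENNReal.ofReal u)⁻¹ * (ENNReal.ofReal u * nnrearr f u) := by
              rw [← mul_assoc, ENNReal.inv_mul_cancel (by simp [hu]) ENNReal.ofReal_ne_top, one_mul]
        _ ≤ _ := mul_le_mul_right hfu _
    _ = (1 + ENNReal.ofReal (v - u) * (ENNReal.ofReal u)⁻¹) * I := by ring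
    _ = ENNReal.ofReal (v / u) * I := by
        congr 1
        rw [← ENNReal.ofReal_inv_of_pos hu, ← ENNReal.ofReal_mul (by linarith), ← ENNReal.ofReal_one,
          ← ENNReal.ofReal_add zero_le_one (mul_nonneg (by linarith) (by positivity))]
        congr 1
        field_simp
        ring
  rw [nnrearr2, nnrearr2, ← hI, ← hJ]
  calc (ENNReal.ofReal v)⁻¹ * J ≤ (ENNReal.ofReal v)⁻¹ * (ENNReal.ofReal (v / u) * I) := by
        exact mul_le_mul_right hstep _
  _ = (ENNReal.ofReal u)⁻¹ * I := by
      rw [← mul_assoc]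
      congr 1
      rw [ENNReal.ofReal_div_of_pos hu, ENNReal.div_eq_inv_mul, ← mul_assoc,
        mul_comm (ENNReal.ofReal v)⁻¹ (ENNReal.ofReal u)⁻¹, mul_assoc,
        ENNReal.inv_mul_cancel (by simp [hv]) ENNReal.ofReal_ne_top, mul_one]

lemma s15_meas_rpow (c : ℝ) : Measurable fun x : ℝ => x ^ c := by measurability

lemma s15_lint_rpow {β : ℝ} (hβ : β + 1 ≠ 0) {a b : ℝ} (ha : 0 < a) (hab : a ≤ b) :
    ∫⁻ s in Set.Ioo a b, ENNReal.ofReal (s ^ β)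
      = ENNReal.ofReal ((b ^ (β + 1) - a ^ (β + 1)) / (β + 1)) := by
  have hcont : ContinuousOn (fun s : ℝ => s ^ β) (Set.Icc a b) := by
    intro s hs
    exact (Real.continuousAt_rpow_const s β (Or.inl (ne_of_gt (lt_of_lt_of_le ha hs.1)))).continuousWithinAt
  have hInt : IntegrableOn (fun s : ℝ => s ^ β) (Set.Ioo a b) :=
    (hcont.integrableOn_Icc).mono_set Set.Ioo_subset_Icc_self
  have hnn : (fun _ : ℝ => (0:ℝ)) ≤ᵐ[volume.restrict (Set.Ioo a b)] fun s : ℝ => s ^ β := by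
    refine (ae_restrict_iff' measurableSet_Ioo).2 (Filter.Eventually.of_forall ?_)
    intro x hx
    exact Real.rpow_nonneg (le_of_lt (lt_trans ha hx.1)) β
  rw [← ofReal_integral_eq_lintegral_ofReal hInt hnn]
  congr 1
  have h1 : ∫ s in Set.Ioo a b, s ^ β = ∫ s in Set.Ioc a b, s ^ β :=
    (integral_Ioc_eq_integral_Ioo).symm
  have h2 : ∫ s in Set.Ioc a b, s ^ β = ∫ s in a..b, s ^ β :=
    (intervalIntegral.integral_of_le hab).symm
  rw [h1, h2, integral_rpow (Or.inr ⟨fun h => hβ (by rw [h]; ring), notMem_uIcc_of_lt ha (lt_of_lt_of_le ha hab)⟩)]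

lemma s15_lint_rpow_Ioo1 {α : ℝ} (hα : α < 0) {a : ℝ} (ha : 0 < a) (ha1 : a < 1) :
    ∫⁻ s in Set.Ioo a 1, ENNReal.ofReal (s ^ (α - 1))
      = ENNReal.ofReal ((a ^ α - 1) / (-α)) := by
  rw [s15_lint_rpow (by simpa using hα.ne) ha ha1.le]
  congr 1
  rw [sub_add_cancel, Real.one_rpow]
  rw [div_eq_div_iff hα.ne (by linarith)]
  ring

lemma s15_one_le_rpow {s α : ℝ} (hs : 0 < s) (hs1 : s ≤ 1) (hα : α ≤ 0) :
    1 ≤ s ^ α := Real.one_le_rpow_of_pos_of_le_one_of_nonpos hs hs1 hα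

lemma s15_ofReal_rpow_mul_inv {s α : ℝ} (hs : 0 < s) :
    ENNReal.ofReal (s ^ α) * (ENNReal.ofReal s)⁻¹ = ENNReal.ofReal (s ^ (α - 1)) := by
  rw [← ENNReal.ofReal_inv_of_pos hs, ← ENNReal.ofReal_mul (Real.rpow_nonneg hs.le α)]
  congr 1
  rw [← Real.rpow_neg_one s, ← Real.rpow_add hs]
  ring_nf

lemma s15_upper {α : ℝ} (hα1 : -1 < α) (hα0 : α < 0) {r : ℝ} (hr0 : 0 < r) (hr4 : r < 1/4)
    (f : ℝ → ℝ≥0∞) (hf : Measurable f) :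
    ∫⁻ s in Set.Ioo r 1, f s * ENNReal.ofReal (s ^ α)
      ≤ ENNReal.ofReal 3 * ∫⁻ u in Set.Ioo r 1, ENNReal.ofReal (u ^ α) * nnrearr2 f u := by
  have hr1 : r < 1 := by linarith
  set T := ∫⁻ u in Set.Ioo r 1, ENNReal.ofReal (u ^ α) * nnrearr2 f u with hT
  set h : ℝ → ℝ≥0∞ := fun u => ENNReal.ofReal ((-α) * u ^ (α - 1)) with hh
  have hmeas_h : Measurable h :=
    ENNReal.measurable_ofReal.comp (measurable_const.mul (s15_meas_rpow (α - 1)))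
  -- key1
  have key1 : ∀ u ∈ Set.Ioo r 1, (∫⁻ s in Set.Ioo r u, f s) ≤ ENNReal.ofReal u * nnrearr2 f u := by
    intro u hu
    have hu0 : 0 < u := lt_trans hr0 hu.1
    calc ∫⁻ s in Set.Ioo r u, f s ≤ ∫⁻ s in Set.Ioo 0 u, f s :=
          lintegral_mono_set (Set.Ioo_subset_Ioo hr0.le le_rfl)
    _ ≤ ∫⁻ s in Set.Ioo 0 u, nnrearr f s := s15_claimL f hf hu0 hu.2.le
    _ = ENNReal.ofReal u * nnrearr2 f u := s15_int_eq_nnrearr2 f hu0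
  -- key2
  have key2 : ∀ s ∈ Set.Ioo r 1, ENNReal.ofReal (s ^ α)
      = 1 + ∫⁻ u in Set.Ioo s 1, h u := by
    intro s hs
    have hs0 : 0 < s := lt_trans hr0 hs.1
    have hint : ∫⁻ u in Set.Ioo s 1, h u = ENNReal.ofReal (s ^ α - 1) := by
      have : ∀ u : ℝ, h u = ENNReal.ofReal (-α) * ENNReal.ofReal (u ^ (α - 1)) := by
        intro u
        show ENNReal.ofReal (-α * u ^ (α - 1)) = _
        rw [ENNReal.ofReal_mul (by linarith)]
      calc ∫⁻ u in Set.Ioo s 1, h u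
          = ∫⁻ u in Set.Ioo s 1, ENNReal.ofReal (-α) * ENNReal.ofReal (u ^ (α - 1)) :=
            lintegral_congr fun u => this u
      _ = ENNReal.ofReal (-α) * ∫⁻ u in Set.Ioo s 1, ENNReal.ofReal (u ^ (α - 1)) :=
            lintegral_const_mul' _ _ ENNReal.ofReal_ne_top
      _ = ENNReal.ofReal (-α) * ENNReal.ofReal ((s ^ α - 1) / (-α)) := by
            rw [s15_lint_rpow_Ioo1 hα0 hs0 hs.2]
      _ = ENNReal.ofReal (s ^ α - 1) := by
            rw [← ENNReal.ofReal_mul (by linarith)]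
            congr 1
            field_simp
            rw [mul_comm, mul_div_assoc, div_self hα0.ne, mul_one]
    rw [hint, ← ENNReal.ofReal_one, ← ENNReal.ofReal_add zero_le_one
      (by linarith [s15_one_le_rpow hs0 hs.2.le hα0.le])]
    congr 1
    ring
  -- split LHS
  have hsplit : ∫⁻ s in Set.Ioo r 1, f s * ENNReal.ofReal (s ^ α)
      = (∫⁻ s in Set.Ioo r 1, f s) + ∫⁻ s in Set.Ioo r 1, f s * ∫⁻ u in Set.Ioo s 1, h u := by
    have : ∀ s ∈ Set.Ioo r 1, f s * ENNReal.ofReal (s ^ α)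
        = f s + f s * ∫⁻ u in Set.Ioo s 1, h u := by
      intro s hs
      rw [key2 s hs, mul_add, mul_one]
    rw [setLIntegral_congr_fun measurableSet_Ioo this]
    apply lintegral_add_left hf
  -- Term1
  have hterm1 : (∫⁻ s in Set.Ioo r 1, f s) ≤ nnrearr2 f 1 := by
    calc ∫⁻ s in Set.Ioo r 1, f s ≤ ∫⁻ s in Set.Ioo 0 1, f s :=
          lintegral_mono_set (Set.Ioo_subset_Ioo hr0.le le_rfl)
    _ ≤ ∫⁻ s in Set.Ioo 0 1, nnrearr f s := s15_claimL f hf one_pos le_rfl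
    _ = ENNReal.ofReal 1 * nnrearr2 f 1 := s15_int_eq_nnrearr2 f one_pos
    _ = nnrearr2 f 1 := by simp
  have hclaim24 : nnrearr2 f 1 ≤ ENNReal.ofReal 2 * T := by
    have hlow : ENNReal.ofReal (3/4) * nnrearr2 f 1 ≤ T := by
      calc ENNReal.ofReal (3/4) * nnrearr2 f 1
          = ∫⁻ _ in Set.Ioo (1/4 : ℝ) 1, nnrearr2 f 1 := by
            rw [setLIntegral_const, Real.volume_Ioo, mul_comm]
            norm_num
      _ ≤ ∫⁻ u in Set.Ioo (1/4 : ℝ) 1, ENNReal.ofReal (u ^ α) * nnrearr2 f u := by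
            apply setLIntegral_mono
            · exact (ENNReal.measurable_ofReal.comp (s15_meas_rpow α)).mul (s15_measurable_nnrearr2 f)
            · intro u hu
              calc nnrearr2 f 1 ≤ nnrearr2 f u := s15_nnrearr2_antitone f (by linarith [hu.1]) hu.2.le
              _ = 1 * nnrearr2 f u := (one_mul _).symm
              _ ≤ ENNReal.ofReal (u ^ α) * nnrearr2 f u := by
                  apply mul_le_mul_left
                  rw [← ENNReal.ofReal_one]
                  exact ENNReal.ofReal_le_ofReal (s15_one_le_rpow (by linarith [hu.1]) hu.2.le hα0.le)
      _ ≤ T := lintegral_mono_set (Set.Ioo_subset_Ioo hr4.le le_rfl)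
    calc nnrearr2 f 1
        = (ENNReal.ofReal (3/4))⁻¹ * (ENNReal.ofReal (3/4) * nnrearr2 f 1) := by
          rw [← mul_assoc, ENNReal.inv_mul_cancel (by norm_num) ENNReal.ofReal_ne_top, one_mul]
    _ ≤ (ENNReal.ofReal (3/4))⁻¹ * T := mul_le_mul_right hlow _
    _ = ENNReal.ofReal (4/3) * T := by
          rw [← ENNReal.ofReal_inv_of_pos (by norm_num)]
          norm_num
    _ ≤ ENNReal.ofReal 2 * T := by
          apply mul_le_mul_left
          exact ENNReal.ofReal_le_ofReal (by norm_num)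
  -- Term2
  have hterm2 : (∫⁻ s in Set.Ioo r 1, f s * ∫⁻ u in Set.Ioo s 1, h u) ≤ T := by
    set F : ℝ × ℝ → ℝ≥0∞ := fun p =>
      f p.1 * Set.indicator {q : ℝ × ℝ | q.1 < q.2} (fun q => h q.2) p with hF
    have hFmeas : Measurable F := by
      apply (hf.comp measurable_fst).mul
      exact Measurable.indicator (hmeas_h.comp measurable_snd)
        (measurableSet_lt measurable_fst measurable_snd)
    have eq1 : ∀ s ∈ Set.Ioo r 1,
        f s * ∫⁻ u in Set.Ioo s 1, h u = ∫⁻ u in Set.Ioo r 1, F (s, u) := by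
      intro s hs
      have hpt : ∀ u : ℝ, F (s, u) = f s * (Set.Ioi s).indicator h u := by
        intro u
        by_cases hc : s < u <;> simp [hF, Set.indicator, hc]
      calc f s * ∫⁻ u in Set.Ioo s 1, h u
          = f s * ∫⁻ u in Set.Ioo r 1, (Set.Ioi s).indicator h u := by
            have hset : Set.Ioi s ∩ Set.Ioo r 1 = Set.Ioo s 1 := by
              ext u
              simp only [Set.mem_inter_iff, Set.mem_Ioi, Set.mem_Ioo]
              constructor
              · rintro ⟨h1, _, h3⟩; exact ⟨h1, h3⟩
              · rintro ⟨h1, h3⟩; exact ⟨h1, lt_trans hs.1 h1, h3⟩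
            rw [lintegral_indicator measurableSet_Ioi,
              Measure.restrict_restrict measurableSet_Ioi, hset]
      _ = ∫⁻ u in Set.Ioo r 1, f s * (Set.Ioi s).indicator h u :=
            (lintegral_const_mul (f s) (hmeas_h.indicator measurableSet_Ioi)).symm
      _ = ∫⁻ u in Set.Ioo r 1, F (s, u) := lintegral_congr fun u => (hpt u).symm
    have eq2 : ∀ u ∈ Set.Ioo r 1,
        (∫⁻ s in Set.Ioo r 1, F (s, u)) = h u * ∫⁻ s in Set.Ioo r u, f s := by
      intro u hu
      have hpt : ∀ s : ℝ, F (s, u) = (Set.Iio u).indicator (fun s => f s * h u) s := by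
        intro s
        by_cases hc : s < u <;> simp [hF, Set.indicator, hc]
      calc ∫⁻ s in Set.Ioo r 1, F (s, u)
          = ∫⁻ s in Set.Ioo r 1, (Set.Iio u).indicator (fun s => f s * h u) s :=
            lintegral_congr fun s => hpt s
      _ = ∫⁻ s in Set.Iio u ∩ Set.Ioo r 1, f s * h u := by
            rw [lintegral_indicator measurableSet_Iio, Measure.restrict_restrict measurableSet_Iio]
      _ = ∫⁻ s in Set.Ioo r u, f s * h u := by
            have hset : Set.Iio u ∩ Set.Ioo r 1 = Set.Ioo r u := by
              ext s
              simp only [Set.mem_inter_iff, Set.mem_Iio, Set.mem_Ioo]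
              constructor
              · rintro ⟨h1, h2, _⟩; exact ⟨h2, h1⟩
              · rintro ⟨h2, h1⟩; exact ⟨h1, h2, lt_trans h1 hu.2⟩
            rw [hset]
      _ = (∫⁻ s in Set.Ioo r u, f s) * h u := lintegral_mul_const' _ _ ENNReal.ofReal_ne_top
      _ = h u * ∫⁻ s in Set.Ioo r u, f s := mul_comm _ _
    calc ∫⁻ s in Set.Ioo r 1, f s * ∫⁻ u in Set.Ioo s 1, h u
        = ∫⁻ s in Set.Ioo r 1, ∫⁻ u in Set.Ioo r 1, F (s, u) :=
          setLIntegral_congr_fun measurableSet_Ioo eq1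
    _ = ∫⁻ u in Set.Ioo r 1, ∫⁻ s in Set.Ioo r 1, F (s, u) :=
          lintegral_lintegral_swap hFmeas.aemeasurable
    _ = ∫⁻ u in Set.Ioo r 1, h u * ∫⁻ s in Set.Ioo r u, f s :=
          setLIntegral_congr_fun measurableSet_Ioo eq2
    _ ≤ ∫⁻ u in Set.Ioo r 1, h u * (ENNReal.ofReal u * nnrearr2 f u) := by
          apply setLIntegral_mono
          · apply hmeas_h.mul
            exact (ENNReal.measurable_ofReal.comp measurable_id).mul (s15_measurable_nnrearr2 f)
          · intro u hu
            exact mul_le_mul_right (key1 u hu) _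
    _ = ∫⁻ u in Set.Ioo r 1, ENNReal.ofReal (-α) * (ENNReal.ofReal (u ^ α) * nnrearr2 f u) := by
          apply setLIntegral_congr_fun measurableSet_Ioo
          intro u hu
          dsimp only
          have hu0 : 0 < u := lt_trans hr0 hu.1
          rw [← mul_assoc, ← mul_assoc]
          congr 1
          show ENNReal.ofReal (-α * u ^ (α - 1)) * ENNReal.ofReal u = _
          rw [← ENNReal.ofReal_mul (mul_nonneg (by linarith) (Real.rpow_nonneg hu0.le _)),
            ← ENNReal.ofReal_mul (by linarith)]
          congr 1
          have : u ^ (α - 1) * u = u ^ α := by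
            rw [← Real.rpow_add_one (ne_of_gt hu0) (α - 1)]
            norm_num
          calc (-α) * u ^ (α - 1) * u = (-α) * (u ^ (α - 1) * u) := by ring
          _ = (-α) * u ^ α := by rw [this]
    _ = ENNReal.ofReal (-α) * T := lintegral_const_mul' _ _ ENNReal.ofReal_ne_top
    _ ≤ 1 * T := by
          apply mul_le_mul_left
          rw [← ENNReal.ofReal_one]
          exact ENNReal.ofReal_le_ofReal (by linarith)
    _ = T := one_mul T
  calc ∫⁻ s in Set.Ioo r 1, f s * ENNReal.ofReal (s ^ α)
      = (∫⁻ s in Set.Ioo r 1, f s) + ∫⁻ s in Set.Ioo r 1, f s * ∫⁻ u in Set.Ioo s 1, h u := hsplit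
  _ ≤ nnrearr2 f 1 + T := add_le_add hterm1 hterm2
  _ ≤ ENNReal.ofReal 2 * T + 1 * T := add_le_add hclaim24 (by rw [one_mul])
  _ = (ENNReal.ofReal 2 + 1) * T := by ring
  _ = ENNReal.ofReal 3 * T := by
        rw [← ENNReal.ofReal_one, ← ENNReal.ofReal_add (by norm_num) (by norm_num)]
        norm_num

lemma s15_lower {α : ℝ} (hα1 : -1 < α) (hα0 : α < 0) {r : ℝ} (hr0 : 0 < r) (hr4 : r < 1/4)
    (X : RIFunctionNorm) (f : ℝ → ℝ≥0∞) (hf : Measurable f) (hN : X.N f ≤ 1) :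
    ∫⁻ s in Set.Ioo r 1, ENNReal.ofReal (s ^ α) * nnrearr2 f s
      ≤ ENNReal.ofReal (3 / (-α)) *
        assocNorm X (fun s => Set.indicator (Set.Ioo r 1) (fun s => ENNReal.ofReal (s ^ α)) s) := by
  have hr1 : r < 1 := by linarith
  set fstar := nnrearr f with hfstar
  have hfsm : Measurable fstar := s15_measurable_nnrearr f
  set g : ℝ → ℝ≥0∞ := fun s => Set.indicator (Set.Ioo r 1) (fun s => ENNReal.ofReal (s ^ α)) s
    with hg
  set A := assocNorm X g with hA
  -- Step 1+2 : rewrite and swap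
  set F : ℝ × ℝ → ℝ≥0∞ := fun p =>
    ENNReal.ofReal (p.1 ^ (α - 1)) * Set.indicator {q : ℝ × ℝ | q.2 < q.1} (fun q => fstar q.2) p
    with hF
  have hFmeas : Measurable F := by
    apply ((ENNReal.measurable_ofReal.comp ((s15_meas_rpow (α-1)).comp measurable_fst))).mul
    exact Measurable.indicator (hfsm.comp measurable_snd)
      (measurableSet_lt measurable_snd measurable_fst)
  have eq1 : ∀ s ∈ Set.Ioo r 1, ENNReal.ofReal (s ^ α) * nnrearr2 f s
      = ∫⁻ t in Set.Ioo (0:ℝ) 1, F (s, t) := by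
    intro s hs
    have hs0 : 0 < s := lt_trans hr0 hs.1
    have hstep1 : ENNReal.ofReal (s ^ α) * nnrearr2 f s
        = ENNReal.ofReal (s ^ (α - 1)) * ∫⁻ t in Set.Ioo (0:ℝ) s, fstar t := by
      rw [nnrearr2, ← mul_assoc, s15_ofReal_rpow_mul_inv hs0]
    have hset : Set.Iio s ∩ Set.Ioo (0:ℝ) 1 = Set.Ioo 0 s := by
      ext t
      simp only [Set.mem_inter_iff, Set.mem_Iio, Set.mem_Ioo]
      constructor
      · rintro ⟨h1, h2, _⟩; exact ⟨h2, h1⟩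
      · rintro ⟨h2, h1⟩; exact ⟨h1, h2, lt_trans h1 hs.2⟩
    have hpt : ∀ t : ℝ, F (s, t) = ENNReal.ofReal (s ^ (α - 1)) * (Set.Iio s).indicator fstar t := by
      intro t
      by_cases hc : t < s <;> simp [hF, Set.indicator, hc]
    rw [hstep1]
    calc ENNReal.ofReal (s ^ (α - 1)) * ∫⁻ t in Set.Ioo (0:ℝ) s, fstar t
        = ENNReal.ofReal (s ^ (α - 1)) * ∫⁻ t in Set.Ioo (0:ℝ) 1, (Set.Iio s).indicator fstar t := by
          rw [lintegral_indicator measurableSet_Iio,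
            Measure.restrict_restrict measurableSet_Iio, hset]
    _ = ∫⁻ t in Set.Ioo (0:ℝ) 1, ENNReal.ofReal (s ^ (α - 1)) * (Set.Iio s).indicator fstar t :=
          (lintegral_const_mul' _ _ ENNReal.ofReal_ne_top).symm
    _ = ∫⁻ t in Set.Ioo (0:ℝ) 1, F (s, t) := lintegral_congr fun t => (hpt t).symm
  have eq2 : ∀ t ∈ Set.Ioo (0:ℝ) 1, (∫⁻ s in Set.Ioo r 1, F (s, t))
      = fstar t * ∫⁻ s in Set.Ioo (max t r) 1, ENNReal.ofReal (s ^ (α - 1)) := by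
    intro t ht
    have hset : Set.Ioi t ∩ Set.Ioo r 1 = Set.Ioo (max t r) 1 := by
      ext s
      simp only [Set.mem_inter_iff, Set.mem_Ioi, Set.mem_Ioo, max_lt_iff]
      tauto
    have hpt : ∀ s : ℝ, F (s, t)
        = (Set.Ioi t).indicator (fun s => ENNReal.ofReal (s ^ (α - 1)) * fstar t) s := by
      intro s
      by_cases hc : t < s <;> simp [hF, Set.indicator, hc]
    calc ∫⁻ s in Set.Ioo r 1, F (s, t)
        = ∫⁻ s in Set.Ioo r 1,
            (Set.Ioi t).indicator (fun s => ENNReal.ofReal (s ^ (α - 1)) * fstar t) s :=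
          lintegral_congr fun s => hpt s
    _ = ∫⁻ s in Set.Ioo (max t r) 1, ENNReal.ofReal (s ^ (α - 1)) * fstar t := by
          rw [lintegral_indicator measurableSet_Ioi,
            Measure.restrict_restrict measurableSet_Ioi, hset]
    _ = (∫⁻ s in Set.Ioo (max t r) 1, ENNReal.ofReal (s ^ (α - 1))) * fstar t :=
          lintegral_mul_const _ (ENNReal.measurable_ofReal.comp (s15_meas_rpow (α-1)))
    _ = fstar t * ∫⁻ s in Set.Ioo (max t r) 1, ENNReal.ofReal (s ^ (α - 1)) := mul_comm _ _
  -- Step 3 : inner bound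
  have inner_bound : ∀ t ∈ Set.Ioo (0:ℝ) 1,
      (∫⁻ s in Set.Ioo (max t r) 1, ENNReal.ofReal (s ^ (α - 1)))
        ≤ ENNReal.ofReal (1 / (-α)) * ENNReal.ofReal ((max t r) ^ α) := by
    intro t ht
    have hc0 : 0 < max t r := lt_of_lt_of_le hr0 (le_max_right t r)
    have hc1 : max t r < 1 := max_lt ht.2 hr1
    have hna : (0:ℝ) < -α := by linarith
    rw [s15_lint_rpow_Ioo1 hα0 hc0 hc1]
    rw [← ENNReal.ofReal_mul (one_div_nonneg.2 hna.le)]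
    apply ENNReal.ofReal_le_ofReal
    calc ((max t r) ^ α - 1) / (-α) ≤ (max t r) ^ α / (-α) := by gcongr; linarith
    _ = 1 / (-α) * (max t r) ^ α := by ring
  have hna : (0:ℝ) < -α := by linarith
  have hNfstar : X.N fstar ≤ 1 := by
    rw [X.rearr_eq fstar f hfsm hf (s15_nnrearr_nnrearr f hf)]; exact hN
  set W1 := (∫⁻ t in Set.Ioo (0:ℝ) r, fstar t) * ENNReal.ofReal (r ^ α) with hW1
  set W2 := ∫⁻ t in Set.Ioo r 1, fstar t * ENNReal.ofReal (t ^ α) with hW2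
  have hmain : ∫⁻ s in Set.Ioo r 1, ENNReal.ofReal (s ^ α) * nnrearr2 f s
      ≤ ENNReal.ofReal (1 / (-α)) * (W1 + W2) := by
    calc ∫⁻ s in Set.Ioo r 1, ENNReal.ofReal (s ^ α) * nnrearr2 f s
        = ∫⁻ s in Set.Ioo r 1, ∫⁻ t in Set.Ioo (0:ℝ) 1, F (s, t) :=
          setLIntegral_congr_fun measurableSet_Ioo eq1
    _ = ∫⁻ t in Set.Ioo (0:ℝ) 1, ∫⁻ s in Set.Ioo r 1, F (s, t) :=
          lintegral_lintegral_swap hFmeas.aemeasurable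
    _ = ∫⁻ t in Set.Ioo (0:ℝ) 1, fstar t * ∫⁻ s in Set.Ioo (max t r) 1,
          ENNReal.ofReal (s ^ (α - 1)) :=
          setLIntegral_congr_fun measurableSet_Ioo eq2
    _ ≤ ∫⁻ t in Set.Ioo (0:ℝ) 1, fstar t *
          (ENNReal.ofReal (1 / (-α)) * ENNReal.ofReal ((max t r) ^ α)) := by
          apply setLIntegral_mono
          · exact hfsm.mul (measurable_const.mul (ENNReal.measurable_ofReal.comp
              ((s15_meas_rpow α).comp (measurable_id.max measurable_const))))
          · intro t ht
            exact mul_le_mul_right (inner_bound t ht) _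
    _ = ∫⁻ t in Set.Ioo (0:ℝ) 1, ENNReal.ofReal (1 / (-α)) *
          (fstar t * ENNReal.ofReal ((max t r) ^ α)) := lintegral_congr fun t => by ring
    _ = ENNReal.ofReal (1 / (-α)) *
          ∫⁻ t in Set.Ioo (0:ℝ) 1, fstar t * ENNReal.ofReal ((max t r) ^ α) :=
          lintegral_const_mul' _ _ ENNReal.ofReal_ne_top
    _ = ENNReal.ofReal (1 / (-α)) * (W1 + W2) := by
          congr 1
          have hsplit : Set.Ioo (0:ℝ) 1 = Set.Ioc 0 r ∪ Set.Ioo r 1 := by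
            ext t; simp only [Set.mem_Ioo, Set.mem_union, Set.mem_Ioc]
            constructor
            · rintro ⟨h1, h2⟩
              rcases le_or_gt t r with h | h
              · exact Or.inl ⟨h1, h⟩
              · exact Or.inr ⟨h, h2⟩
            · rintro (⟨h1, h2⟩ | ⟨h1, h2⟩)
              · exact ⟨h1, lt_of_le_of_lt h2 hr1⟩
              · exact ⟨lt_trans hr0 h1, h2⟩
          rw [hsplit, lintegral_union measurableSet_Ioo
            (Set.disjoint_left.2 fun t h1 h2 => absurd h2.1 (not_lt.2 h1.2))]
          congr 1
          · calc ∫⁻ t in Set.Ioc (0:ℝ) r, fstar t * ENNReal.ofReal ((max t r) ^ α)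
                = ∫⁻ t in Set.Ioc (0:ℝ) r, fstar t * ENNReal.ofReal (r ^ α) := by
                  apply setLIntegral_congr_fun measurableSet_Ioc
                  intro t ht
                  dsimp only
                  rw [max_eq_right ht.2]
            _ = ∫⁻ t in Set.Ioo (0:ℝ) r, fstar t * ENNReal.ofReal (r ^ α) :=
                  (setLIntegral_congr Ioo_ae_eq_Ioc).symm
            _ = W1 := lintegral_mul_const' _ _ ENNReal.ofReal_ne_top
          · apply setLIntegral_congr_fun measurableSet_Ioo
            intro t ht
            dsimp only
            rw [max_eq_left ht.1.le]
  -- W2 ≤ A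
  have hsub : Set.Ioo r 1 ∩ Set.Ioo (0:ℝ) 1 = Set.Ioo r 1 :=
    Set.inter_eq_left.2 (Set.Ioo_subset_Ioo hr0.le le_rfl)
  have hW2A : W2 ≤ A := by
    have hterm : ∫⁻ s in Set.Ioo (0:ℝ) 1, fstar s * g s = W2 := by
      have hpt : ∀ s : ℝ, fstar s * g s
          = (Set.Ioo r 1).indicator (fun s => fstar s * ENNReal.ofReal (s ^ α)) s := by
        intro s
        show fstar s * (Set.Ioo r 1).indicator _ s = _
        by_cases hc : s ∈ Set.Ioo r 1
        · rw [Set.indicator_of_mem hc, Set.indicator_of_mem hc]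
        · rw [Set.indicator_of_notMem hc, Set.indicator_of_notMem hc, mul_zero]
      rw [lintegral_congr hpt, lintegral_indicator measurableSet_Ioo,
        Measure.restrict_restrict measurableSet_Ioo, hsub]
    calc W2 = ∫⁻ s in Set.Ioo (0:ℝ) 1, fstar s * g s := hterm.symm
    _ ≤ A := by
        rw [hA]
        unfold assocNorm
        exact le_biSup (fun f : ℝ → ℝ≥0∞ => ∫⁻ s in Set.Ioo (0:ℝ) 1, f s * g s)
          (show fstar ∈ {f : ℝ → ℝ≥0∞ | Measurable f ∧ X.N f ≤ 1} from ⟨hfsm, hNfstar⟩)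
  -- W1 ≤ 2 A
  have hW1A : W1 ≤ ENNReal.ofReal 2 * A := by
    set h₀ : ℝ → ℝ≥0∞ := (Set.Ioo r (2*r)).indicator (fun t => fstar (t - r)) with hh₀
    have hh₀m : Measurable h₀ :=
      Measurable.indicator (hfsm.comp (measurable_id.sub measurable_const)) measurableSet_Ioo
    have h2r1 : 2*r < 1 := by linarith
    have hindm : Measurable ((Set.Ioo (0:ℝ) r).indicator fstar) :=
      hfsm.indicator measurableSet_Ioo
    have hNh₀ : X.N h₀ ≤ 1 := by
      have hdist : ∀ s, s15D h₀ s = s15D ((Set.Ioo (0:ℝ) r).indicator fstar) s := by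
        intro s
        have hL : {t : ℝ | t ∈ Set.Ioo (0:ℝ) 1 ∧ s < h₀ t}
            = (fun t => t + (-r)) ⁻¹'
              {t : ℝ | t ∈ Set.Ioo (0:ℝ) 1 ∧ s < ((Set.Ioo (0:ℝ) r).indicator fstar) t} := by
          ext t
          simp only [Set.mem_setOf_eq, Set.mem_preimage]
          constructor
          · rintro ⟨ht01, hlt⟩
            by_cases hc : t ∈ Set.Ioo r (2*r)
            · have hmem : t + -r ∈ Set.Ioo (0:ℝ) r :=
                Set.mem_Ioo.2 ⟨by linarith [hc.1], by linarith [hc.2]⟩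
              refine ⟨Set.mem_Ioo.2 ⟨(Set.mem_Ioo.1 hmem).1, by linarith [(Set.mem_Ioo.1 hmem).2]⟩, ?_⟩
              rw [Set.indicator_of_mem hmem]
              rw [hh₀, Set.indicator_of_mem hc] at hlt
              rw [show t + -r = t - r from by ring]
              exact hlt
            · rw [hh₀, Set.indicator_of_notMem hc] at hlt
              exact absurd hlt (by simp)
          · rintro ⟨ht01, hlt⟩
            by_cases hc : t + -r ∈ Set.Ioo (0:ℝ) r
            · have hc' : t ∈ Set.Ioo r (2*r) :=
                Set.mem_Ioo.2 ⟨by linarith [(Set.mem_Ioo.1 hc).1], by linarith [(Set.mem_Ioo.1 hc).2]⟩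
              refine ⟨Set.mem_Ioo.2 ⟨by linarith [(Set.mem_Ioo.1 hc').1],
                by linarith [(Set.mem_Ioo.1 hc').2]⟩, ?_⟩
              rw [hh₀, Set.indicator_of_mem hc']
              rw [Set.indicator_of_mem hc] at hlt
              rw [show t - r = t + -r from by ring]
              exact hlt
            · rw [Set.indicator_of_notMem hc] at hlt
              exact absurd hlt (by simp)
        rw [s15D, s15D, hL, measure_preimage_add_right]
      have hre : nnrearr h₀ = nnrearr ((Set.Ioo (0:ℝ) r).indicator fstar) :=
        s15_nnrearr_congr _ _ hdist
      have h1 : X.N h₀ = X.N ((Set.Ioo (0:ℝ) r).indicator fstar) :=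
        X.rearr_eq _ _ hh₀m hindm hre
      have h2 : X.N ((Set.Ioo (0:ℝ) r).indicator fstar) ≤ X.N fstar :=
        X.mono _ _ hindm hfsm (Filter.Eventually.of_forall fun t => Set.indicator_le_self _ _ t)
      calc X.N h₀ = _ := h1
      _ ≤ X.N fstar := h2
      _ ≤ 1 := hNfstar
    have hkey : (∫⁻ t in Set.Ioo (0:ℝ) r, fstar t) * ENNReal.ofReal ((2*r) ^ α) ≤ A := by
      have hterm : (∫⁻ t in Set.Ioo (0:ℝ) r, fstar t) * ENNReal.ofReal ((2*r) ^ α)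
          ≤ ∫⁻ s in Set.Ioo (0:ℝ) 1, h₀ s * g s := by
        have hpt : ∀ s : ℝ, h₀ s * g s
            = (Set.Ioo r (2*r)).indicator
              (fun s => fstar (s - r) * ENNReal.ofReal (s ^ α)) s := by
          intro s
          show (Set.Ioo r (2*r)).indicator _ s * (Set.Ioo r 1).indicator _ s = _
          by_cases hc : s ∈ Set.Ioo r (2*r)
          · have hs1 : s ∈ Set.Ioo r 1 :=
              Set.mem_Ioo.2 ⟨(Set.mem_Ioo.1 hc).1, by linarith [(Set.mem_Ioo.1 hc).2]⟩
            rw [Set.indicator_of_mem hc, Set.indicator_of_mem hs1, Set.indicator_of_mem hc]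
          · rw [Set.indicator_of_notMem hc, Set.indicator_of_notMem hc, zero_mul]
        have hsub2 : Set.Ioo r (2*r) ∩ Set.Ioo (0:ℝ) 1 = Set.Ioo r (2*r) :=
          Set.inter_eq_left.2 (fun t ht => ⟨lt_trans hr0 ht.1, by linarith [ht.2]⟩)
        have htrans : ∫⁻ s in Set.Ioo r (2*r), fstar (s - r)
            = ∫⁻ t in Set.Ioo (0:ℝ) r, fstar t := by
          have hpt2 : ∀ s : ℝ, (Set.Ioo r (2*r)).indicator (fun s => fstar (s - r)) s
              = ((Set.Ioo (0:ℝ) r).indicator fstar) (s + (-r)) := by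
            intro s
            by_cases hc : s ∈ Set.Ioo r (2*r)
            · have hmem : s + -r ∈ Set.Ioo (0:ℝ) r := ⟨by linarith [hc.1], by linarith [hc.2]⟩
              rw [Set.indicator_of_mem hc, Set.indicator_of_mem hmem]
              rw [show s + -r = s - r from by ring]
            · have hnm : s + -r ∉ Set.Ioo (0:ℝ) r := fun hmem =>
                hc ⟨by linarith [hmem.1], by linarith [hmem.2]⟩
              rw [Set.indicator_of_notMem hc, Set.indicator_of_notMem hnm]
          calc ∫⁻ s in Set.Ioo r (2*r), fstar (s - r)
              = ∫⁻ s, (Set.Ioo r (2*r)).indicator (fun s => fstar (s - r)) s :=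
                (lintegral_indicator measurableSet_Ioo _).symm
          _ = ∫⁻ s, ((Set.Ioo (0:ℝ) r).indicator fstar) (s + (-r)) := lintegral_congr hpt2
          _ = ∫⁻ s, ((Set.Ioo (0:ℝ) r).indicator fstar) s :=
                lintegral_add_right_eq_self _ _
          _ = ∫⁻ t in Set.Ioo (0:ℝ) r, fstar t := lintegral_indicator measurableSet_Ioo _
        calc (∫⁻ t in Set.Ioo (0:ℝ) r, fstar t) * ENNReal.ofReal ((2*r) ^ α)
            = ∫⁻ s in Set.Ioo r (2*r), fstar (s - r) * ENNReal.ofReal ((2*r) ^ α) := by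
              rw [lintegral_mul_const' _ _ ENNReal.ofReal_ne_top, htrans]
        _ ≤ ∫⁻ s in Set.Ioo r (2*r), fstar (s - r) * ENNReal.ofReal (s ^ α) := by
              apply setLIntegral_mono
              · exact (hfsm.comp (measurable_id.sub measurable_const)).mul
                  (ENNReal.measurable_ofReal.comp (s15_meas_rpow α))
              · intro s hs
                apply mul_le_mul_right
                apply ENNReal.ofReal_le_ofReal
                exact Real.rpow_le_rpow_of_nonpos (lt_trans hr0 hs.1) hs.2.le hα0.le
        _ = ∫⁻ s in Set.Ioo (0:ℝ) 1, h₀ s * g s := by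
              rw [lintegral_congr hpt, lintegral_indicator measurableSet_Ioo,
                Measure.restrict_restrict measurableSet_Ioo, hsub2]
      calc (∫⁻ t in Set.Ioo (0:ℝ) r, fstar t) * ENNReal.ofReal ((2*r) ^ α)
          ≤ ∫⁻ s in Set.Ioo (0:ℝ) 1, h₀ s * g s := hterm
      _ ≤ A := by
          rw [hA]
          unfold assocNorm
          exact le_biSup (fun f : ℝ → ℝ≥0∞ => ∫⁻ s in Set.Ioo (0:ℝ) 1, f s * g s)
            (show h₀ ∈ {f : ℝ → ℝ≥0∞ | Measurable f ∧ X.N f ≤ 1} from ⟨hh₀m, hNh₀⟩)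
    have h2ra : (0:ℝ) < (2*r) ^ α := Real.rpow_pos_of_pos (by linarith) α
    have hrap : (0:ℝ) < r ^ α := Real.rpow_pos_of_pos hr0 α
    have h2ap : (0:ℝ) < (2:ℝ) ^ α := Real.rpow_pos_of_pos (by norm_num) α
    calc W1 = ((∫⁻ t in Set.Ioo (0:ℝ) r, fstar t) * ENNReal.ofReal ((2*r) ^ α))
          * ((ENNReal.ofReal ((2*r) ^ α))⁻¹ * ENNReal.ofReal (r ^ α)) := by
          rw [hW1, mul_assoc, ← mul_assoc (ENNReal.ofReal ((2*r) ^ α)),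
            ENNReal.mul_inv_cancel (by simp [h2ra]) ENNReal.ofReal_ne_top, one_mul]
    _ ≤ A * ((ENNReal.ofReal ((2*r) ^ α))⁻¹ * ENNReal.ofReal (r ^ α)) :=
          mul_le_mul_left hkey _
    _ = A * ENNReal.ofReal (2 ^ (-α)) := by
          congr 1
          rw [← ENNReal.ofReal_inv_of_pos h2ra,
            ← ENNReal.ofReal_mul (inv_nonneg.2 (Real.rpow_nonneg (by linarith) α))]
          congr 1
          rw [Real.mul_rpow (by norm_num) hr0.le, Real.rpow_neg (by norm_num)]
          field_simp
    _ ≤ A * ENNReal.ofReal 2 := by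
          apply mul_le_mul_right
          apply ENNReal.ofReal_le_ofReal
          calc (2:ℝ) ^ (-α) ≤ 2 ^ (1:ℝ) :=
                Real.rpow_le_rpow_of_exponent_le (by norm_num) (by linarith)
          _ = 2 := Real.rpow_one 2
    _ = ENNReal.ofReal 2 * A := mul_comm _ _
  -- combine
  calc ∫⁻ s in Set.Ioo r 1, ENNReal.ofReal (s ^ α) * nnrearr2 f s
      ≤ ENNReal.ofReal (1 / (-α)) * (W1 + W2) := hmain
  _ ≤ ENNReal.ofReal (1 / (-α)) * (ENNReal.ofReal 2 * A + A) :=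
      mul_le_mul_right (add_le_add hW1A hW2A) _
  _ = ENNReal.ofReal (3 / (-α)) * A := by
      have h3 : ENNReal.ofReal 2 * A + A = ENNReal.ofReal 3 * A := by
        calc ENNReal.ofReal 2 * A + A = (ENNReal.ofReal 2 + 1) * A := by ring
        _ = ENNReal.ofReal 3 * A := by
            rw [show (1:ℝ≥0∞) = ENNReal.ofReal 1 by simp,
              ← ENNReal.ofReal_add (by norm_num) (by norm_num)]
            norm_num
      rw [h3, ← mul_assoc, ← ENNReal.ofReal_mul (one_div_nonneg.2 hna.le)]
      congr 2
      ring

/-- Duality formula for the associate norm of `s^{−1+m/n} χ_{(r,1)}`.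
Let `‖·‖_X` be a rearrangement-invariant function norm on `(0,1)`, `n ≥ 2` and
`1 ≤ m ≤ n−1`.  There are constants `c₁, c₂ > 0` depending only on `m` and `n` such that
for every `r ∈ (0,1/4)`,
`c₁ sup_{‖f‖_X ≤ 1} ∫_r^1 s^{−1+m/n} f^{**}(s) ds ≤ ‖s^{−1+m/n} χ_{(r,1)}‖_{X'}
  ≤ c₂ sup_{‖f‖_X ≤ 1} ∫_r^1 s^{−1+m/n} f^{**}(s) ds`. -/
theorem statement15 (n m : ℕ) (hn : 2 ≤ n) (hm : 1 ≤ m) (hmn : m ≤ n - 1) :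
    ∃ c₁ c₂ : ℝ, 0 < c₁ ∧ 0 < c₂ ∧
      ∀ X : RIFunctionNorm, ∀ r : ℝ, r ∈ Set.Ioo (0 : ℝ) (1 / 4) →
        ENNReal.ofReal c₁ *
            (⨆ f ∈ {f : ℝ → ℝ≥0∞ | Measurable f ∧ X.N f ≤ 1},
              ∫⁻ s in Set.Ioo r (1 : ℝ),
                ENNReal.ofReal (s ^ (-1 + (m : ℝ) / n)) * nnrearr2 f s) ≤
          assocNorm X (fun s => Set.indicator (Set.Ioo r 1)
            (fun s => ENNReal.ofReal (s ^ (-1 + (m : ℝ) / n))) s) ∧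
        assocNorm X (fun s => Set.indicator (Set.Ioo r 1)
            (fun s => ENNReal.ofReal (s ^ (-1 + (m : ℝ) / n))) s) ≤
          ENNReal.ofReal c₂ *
            (⨆ f ∈ {f : ℝ → ℝ≥0∞ | Measurable f ∧ X.N f ≤ 1},
              ∫⁻ s in Set.Ioo r (1 : ℝ),
                ENNReal.ofReal (s ^ (-1 + (m : ℝ) / n)) * nnrearr2 f s) := by
  set α : ℝ := -1 + (m : ℝ) / n with hαdef
  have hn0 : (0:ℝ) < n := by
    have : (2:ℝ) ≤ n := by exact_mod_cast hn
    linarith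
  have hm1 : (1:ℝ) ≤ m := by exact_mod_cast hm
  have hmn' : (m:ℝ) ≤ (n:ℝ) - 1 := by
    have h1 : (m:ℝ) ≤ ((n - 1 : ℕ) : ℝ) := by exact_mod_cast hmn
    have h2 : ((n - 1 : ℕ) : ℝ) = (n:ℝ) - 1 := by
      have : 1 ≤ n := le_trans (by norm_num) hn
      push_cast [Nat.cast_sub this]
      ring
    linarith [h2 ▸ h1]
  have hq0 : 0 < (m:ℝ)/n := by positivity
  have hq1 : (m:ℝ)/n < 1 := (div_lt_one hn0).2 (by linarith)
  have hα1 : -1 < α := by rw [hαdef]; linarith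
  have hα0 : α < 0 := by rw [hαdef]; linarith
  have hna : (0:ℝ) < -α := by linarith
  refine ⟨(-α)/3, 3, div_pos hna (by norm_num), by norm_num, ?_⟩
  intro X r hr
  have hr0 : 0 < r := hr.1
  have hr4 : r < 1/4 := hr.2
  set S := ⨆ f ∈ {f : ℝ → ℝ≥0∞ | Measurable f ∧ X.N f ≤ 1},
      ∫⁻ s in Set.Ioo r (1:ℝ), ENNReal.ofReal (s ^ α) * nnrearr2 f s with hS
  set A := assocNorm X (fun s => Set.indicator (Set.Ioo r 1)
      (fun s => ENNReal.ofReal (s ^ α)) s) with hA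
  constructor
  · -- lower estimate
    have hstep : ∀ f ∈ {f : ℝ → ℝ≥0∞ | Measurable f ∧ X.N f ≤ 1},
        ENNReal.ofReal ((-α)/3) *
          (∫⁻ s in Set.Ioo r (1:ℝ), ENNReal.ofReal (s ^ α) * nnrearr2 f s) ≤ A := by
      intro f hf
      calc ENNReal.ofReal ((-α)/3) *
            (∫⁻ s in Set.Ioo r (1:ℝ), ENNReal.ofReal (s ^ α) * nnrearr2 f s)
          ≤ ENNReal.ofReal ((-α)/3) * (ENNReal.ofReal (3 / (-α)) * A) :=
            mul_le_mul_right (s15_lower hα1 hα0 hr0 hr4 X f hf.1 hf.2) _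
      _ = A := by
          rw [← mul_assoc, ← ENNReal.ofReal_mul (by positivity)]
          rw [show (-α)/3 * (3/(-α)) = 1 by
            rw [div_mul_div_comm, mul_comm (3:ℝ) (-α)]
            exact div_self (by positivity)]
          simp
    calc ENNReal.ofReal ((-α)/3) * S
        = ⨆ f ∈ {f : ℝ → ℝ≥0∞ | Measurable f ∧ X.N f ≤ 1},
            ENNReal.ofReal ((-α)/3) *
              ∫⁻ s in Set.Ioo r (1:ℝ), ENNReal.ofReal (s ^ α) * nnrearr2 f s := by
          rw [hS, ENNReal.mul_iSup]
          apply iSup_congr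
          intro f
          rw [ENNReal.mul_iSup]
    _ ≤ A := iSup₂_le hstep
  · -- upper estimate
    rw [hA, assocNorm]
    apply iSup₂_le
    intro f hf
    have hsub : Set.Ioo r 1 ∩ Set.Ioo (0:ℝ) 1 = Set.Ioo r 1 :=
      Set.inter_eq_left.2 (Set.Ioo_subset_Ioo hr0.le le_rfl)
    have h1 : ∫⁻ s in Set.Ioo (0:ℝ) 1,
        f s * Set.indicator (Set.Ioo r 1) (fun s => ENNReal.ofReal (s ^ α)) s
        = ∫⁻ s in Set.Ioo r 1, f s * ENNReal.ofReal (s ^ α) := by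
      have hpt : ∀ s : ℝ,
          f s * Set.indicator (Set.Ioo r 1) (fun s => ENNReal.ofReal (s ^ α)) s
          = (Set.Ioo r 1).indicator (fun s => f s * ENNReal.ofReal (s ^ α)) s := by
        intro s
        by_cases hc : s ∈ Set.Ioo r 1
        · rw [Set.indicator_of_mem hc, Set.indicator_of_mem hc]
        · rw [Set.indicator_of_notMem hc, Set.indicator_of_notMem hc, mul_zero]
      rw [lintegral_congr hpt, lintegral_indicator measurableSet_Ioo,
        Measure.restrict_restrict measurableSet_Ioo, hsub]
    calc ∫⁻ s in Set.Ioo (0:ℝ) 1,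
          f s * Set.indicator (Set.Ioo r 1) (fun s => ENNReal.ofReal (s ^ α)) s
        = ∫⁻ s in Set.Ioo r 1, f s * ENNReal.ofReal (s ^ α) := h1
    _ ≤ ENNReal.ofReal 3 *
          ∫⁻ u in Set.Ioo r 1, ENNReal.ofReal (u ^ α) * nnrearr2 f u :=
          s15_upper hα1 hα0 hr0 hr4 f hf.1
    _ ≤ ENNReal.ofReal 3 * S := by
          apply mul_le_mul_right
          rw [hS]
          exact le_biSup
            (fun f : ℝ → ℝ≥0∞ => ∫⁻ s in Set.Ioo r (1:ℝ), ENNReal.ofReal (s ^ α) * nnrearr2 f s)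
            hf
end
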